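/- arXiv:2604.04673 — 10 statements merged into one kernel-verified Lean document; each statement's English description precedes it below -/
import Mathlib

section
/- Let p ≥ 3 and d ≥ 1 be integers and let C, κ, R₀, R₁ > 0 be real constants. Then there is no twice continuously differentiable function q : (0,∞) → (0,∞) that simultaneously satisfies: q''(r) + ((p−1)/r)·q'(r) ≤ 0 for all r ≥ R₀, and q(r) ≤ C·exp(−κ·r^{2/d}) for all r ≥ R₁. -/
open Filter Real Set


/-- Analytic core of Theorem 2.4: there is no positive, twice continuously
differentiable `q` on `(0,∞)` that is radially superharmonic in dimension `p ≥ 3`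
outside radius `R₀` and satisfies a stretched-exponential upper bound
`q r ≤ C exp (-κ r^(2/d))` outside radius `R₁`. -/
theorem stmt2 (p d : ℕ) (hp : 3 ≤ p) (hd : 1 ≤ d) (C κ R₀ R₁ : ℝ)
    (hC : 0 < C) (hκ : 0 < κ) (hR₀ : 0 < R₀) (hR₁ : 0 < R₁) :
    ¬ ∃ q : ℝ → ℝ,
      (∀ r > 0, 0 < q r) ∧
      ContDiffOn ℝ 2 q (Set.Ioi 0) ∧
      (∀ r ≥ R₀, deriv (deriv q) r + ((p : ℝ) - 1) / r * deriv q r ≤ 0) ∧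
      (∀ r ≥ R₁, q r ≤ C * Real.exp (-κ * r ^ (2 / (d : ℝ)))) := by
  rintro ⟨q, hpos, hq, hsup, hbd⟩
  set n : ℕ := p - 1 with hn
  set m : ℕ := p - 2 with hm
  have hm1 : 1 ≤ m := by omega
  have hnm : n = m + 1 := by omega
  have hpn : (n : ℝ) = (p : ℝ) - 1 := by
    have hpe : p = n + 1 := by omega
    rw [hpe]; push_cast; ring
  have hd0 : (0:ℝ) < (d:ℝ) := by exact_mod_cast hd
  -- derivatives exist
  have hqd : ∀ x > (0:ℝ), HasDerivAt q (deriv q x) x := fun x hx =>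
    ((hq.differentiableOn (by norm_num)).differentiableAt
      (isOpen_Ioi.mem_nhds hx)).hasDerivAt
  have hq1 : ContDiffOn ℝ 1 (deriv q) (Set.Ioi 0) :=
    hq.deriv_of_isOpen isOpen_Ioi (by norm_num)
  have hqd2 : ∀ x > (0:ℝ), HasDerivAt (deriv q) (deriv (deriv q) x) x := fun x hx =>
    ((hq1.differentiableOn (by norm_num)).differentiableAt
      (isOpen_Ioi.mem_nhds hx)).hasDerivAt
  -- the function A
  set A : ℝ → ℝ := fun r => r ^ n * deriv q r with hA
  have hAd : ∀ x > (0:ℝ),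
      HasDerivAt A ((n:ℝ) * x ^ (n-1) * deriv q x + x ^ n * deriv (deriv q) x) x :=
    fun x hx => (hasDerivAt_pow n x).mul (hqd2 x hx)
  have hAanti : AntitoneOn A (Set.Ici R₀) := by
    have hsub : Set.Ici R₀ ⊆ Set.Ioi 0 := fun x hx => lt_of_lt_of_le hR₀ hx
    apply antitoneOn_of_deriv_nonpos (convex_Ici R₀)
    · exact ((continuous_pow n).continuousOn).mul (hq1.continuousOn.mono hsub)
    · rw [interior_Ici]
      exact fun x hx =>
        ((hAd x (lt_trans hR₀ hx)).differentiableAt).differentiableWithinAt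
    · intro x hx
      rw [interior_Ici] at hx
      have hx0 : (0:ℝ) < x := lt_trans hR₀ hx
      rw [(hAd x hx0).deriv]
      have key := hsup x hx.le
      have heq : (n:ℝ) * x ^ (n-1) * deriv q x + x ^ n * deriv (deriv q) x
          = x ^ n * (deriv (deriv q) x + ((p:ℝ) - 1) / x * deriv q x) := by
        rw [← hpn, hnm, Nat.add_sub_cancel]
        field_simp
        ring
      rw [heq]
      exact mul_nonpos_of_nonneg_of_nonpos (by positivity) key
  -- common tendsto fact
  set M : ℝ := max (max R₀ R₁) 1 with hM
  have hM1 : (1:ℝ) ≤ M := le_max_right _ _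
  have hM0 : (0:ℝ) < M := lt_of_lt_of_le one_pos hM1
  have hMR₀ : R₀ ≤ M := le_trans (le_max_left _ _) (le_max_left _ _)
  have hMR₁ : R₁ ≤ M := le_trans (le_max_right _ _) (le_max_left _ _)
  have htend : Tendsto (fun r : ℝ => C * (r ^ m * Real.exp (-κ * r ^ (2/(d:ℝ)))))
      atTop (nhds 0) := by
    have h2d : (0:ℝ) < 2/(d:ℝ) := by positivity
    have h1 := tendsto_rpow_mul_exp_neg_mul_atTop_nhds_zero ((d:ℝ) * m / 2) κ hκ
    have h2 : Tendsto (fun r : ℝ => r ^ (2/(d:ℝ))) atTop atTop := tendsto_rpow_atTop h2d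
    have h3 := h1.comp h2
    have h4 : Tendsto (fun r : ℝ => r ^ m * Real.exp (-κ * r ^ (2/(d:ℝ)))) atTop (nhds 0) := by
      apply h3.congr'
      filter_upwards [eventually_gt_atTop (0:ℝ)] with r hr
      have : (r ^ (2/(d:ℝ))) ^ ((d:ℝ) * m / 2) = r ^ m := by
        rw [← Real.rpow_natCast r m, ← Real.rpow_mul hr.le]
        congr 1
        field_simp
      simp only [Function.comp_apply, this]
    have := h4.const_mul C
    simpa using this
  -- key claim: get ε > 0 with eventual lower bound
  have main : ∀ ε > (0:ℝ), (∀ᶠ r in atTop, ε ≤ C * (r ^ m * Real.exp (-κ * r ^ (2/(d:ℝ))))) → False := by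
    intro ε hε hev
    have := ge_of_tendsto htend hev
    linarith
  by_cases hcase : ∀ r ≥ M, 0 ≤ deriv q r
  · -- q is monotone beyond M, so bounded below by q M > 0
    have hmono : MonotoneOn q (Set.Ici M) := by
      apply monotoneOn_of_deriv_nonneg (convex_Ici M)
      · exact hq.continuousOn.mono (fun x hx => lt_of_lt_of_le hM0 hx)
      · rw [interior_Ici]
        exact fun x hx => ((hqd x (lt_trans hM0 hx)).differentiableAt).differentiableWithinAt
      · rw [interior_Ici]
        exact fun x hx => hcase x hx.le
    refine main (q M) (hpos M hM0) ?_
    filter_upwards [eventually_ge_atTop M] with r hr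
    have h1 : q M ≤ q r := hmono (Set.self_mem_Ici) hr hr
    have h2 : q r ≤ C * Real.exp (-κ * r ^ (2/(d:ℝ))) := hbd r (le_trans hMR₁ hr)
    have hr1 : (1:ℝ) ≤ r := le_trans hM1 hr
    have h3 : (1:ℝ) ≤ r ^ m := one_le_pow₀ hr1
    have hE : 0 < Real.exp (-κ * r ^ (2/(d:ℝ))) := Real.exp_pos _
    nlinarith [mul_nonneg (mul_pos hC hE).le (by linarith : (0:ℝ) ≤ r ^ m - 1)]
  · push_neg at hcase
    obtain ⟨r₂, hr₂M, hr₂neg⟩ := hcase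
    have hr₂0 : (0:ℝ) < r₂ := lt_of_lt_of_le hM0 hr₂M
    set a : ℝ := A r₂ with ha
    have ha0 : a < 0 := mul_neg_of_pos_of_neg (pow_pos hr₂0 n) hr₂neg
    -- the comparison function G
    set G : ℝ → ℝ := fun t => q t + (a/(m:ℝ)) * (t ^ m)⁻¹ with hG
    have hm0 : ((m:ℝ)) ≠ 0 := by positivity
    have hGd : ∀ t > (0:ℝ), HasDerivAt G
        (deriv q t + (a/(m:ℝ)) * (-((m:ℝ) * t ^ (m-1)) / (t ^ m) ^ 2)) t := by
      intro t ht
      exact (hqd t ht).add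
        (((hasDerivAt_pow m t).inv (pow_ne_zero m ht.ne')).const_mul (a/(m:ℝ)))
    have hGanti : AntitoneOn G (Set.Ici r₂) := by
      apply antitoneOn_of_deriv_nonpos (convex_Ici r₂)
      · apply ContinuousOn.add
        · exact hq.continuousOn.mono (fun x hx => lt_of_lt_of_le hr₂0 hx)
        · apply ContinuousOn.mul continuousOn_const
          apply ContinuousOn.inv₀
          · exact (continuous_pow m).continuousOn
          · exact fun x hx => pow_ne_zero m (lt_of_lt_of_le hr₂0 hx).ne'
      · rw [interior_Ici]
        exact fun x hx => ((hGd x (lt_trans hr₂0 hx)).differentiableAt).differentiableWithinAt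
      · rw [interior_Ici]
        intro t ht
        have ht0 : (0:ℝ) < t := lt_trans hr₂0 ht
        rw [(hGd t ht0).deriv]
        -- deriv q t ≤ a / t ^ n
        have hAle : A t ≤ a := hAanti (Set.mem_Ici.mpr (le_trans hMR₀ hr₂M))
          (Set.mem_Ici.mpr (le_trans (le_trans hMR₀ hr₂M) ht.le)) ht.le
        have htn : (0:ℝ) < t ^ n := pow_pos ht0 n
        have h1 : deriv q t ≤ a / t ^ n := by
          rw [le_div_iff₀ htn]
          calc deriv q t * t ^ n = A t := by rw [hA]; ring
          _ ≤ a := hAle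
        -- second term equals -a / t ^ n
        have h2 : (a/(m:ℝ)) * (-((m:ℝ) * t ^ (m-1)) / (t ^ m) ^ 2) = -a / t ^ n := by
          have hte : t ^ (m-1) * t ^ (m+1) = (t ^ m) ^ 2 := by
            rw [← pow_add, ← pow_mul]
            congr 1
            omega
          have hne1 : t ^ (m-1) ≠ 0 := pow_ne_zero _ ht0.ne'
          have hne2 : t ^ (m+1) ≠ 0 := pow_ne_zero _ ht0.ne'
          have hnem : t ^ m ≠ 0 := pow_ne_zero _ ht0.ne'
          rw [hnm]
          field_simp
          linear_combination (-(r₂ ^ n * deriv q r₂)) * hte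
        rw [h2]
        have : a / t ^ n + -a / t ^ n = 0 := by ring
        linarith
    -- lower bound q r ≥ (c/2) * (r^m)⁻¹ for r ≥ r₂
    set c : ℝ := -(a/(m:ℝ)) with hc
    have hcpos : 0 < c := by
      rw [hc]
      have : a/(m:ℝ) < 0 := div_neg_of_neg_of_pos ha0 (by positivity)
      linarith
    set ε : ℝ := c / 2 with hε
    have hεpos : 0 < ε := half_pos hcpos
    refine main ε hεpos ?_
    filter_upwards [eventually_ge_atTop r₂, eventually_ge_atTop (1:ℝ)] with r hr hr1
    have hrr : (0:ℝ) < r := lt_of_lt_of_le one_pos hr1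
    have hGle : G (2*r) ≤ G r := hGanti (Set.mem_Ici.mpr hr)
      (Set.mem_Ici.mpr (by linarith)) (by linarith)
    have hq2r : 0 < q (2*r) := hpos _ (by linarith)
    have hrm : (0:ℝ) < r ^ m := pow_pos hrr m
    have h2rm : (2*r) ^ m = 2 ^ m * r ^ m := mul_pow 2 r m
    have h2m : (2:ℝ) ≤ 2 ^ m := by
      calc (2:ℝ) = 2 ^ 1 := (pow_one 2).symm
      _ ≤ 2 ^ m := pow_le_pow_right₀ (by norm_num) hm1
    -- ((2r)^m)⁻¹ ≤ (1/2) * (r^m)⁻¹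
    have hinv : ((2*r) ^ m)⁻¹ ≤ (1/2) * (r ^ m)⁻¹ := by
      rw [h2rm, mul_inv]
      apply mul_le_mul_of_nonneg_right _ (inv_nonneg.mpr hrm.le)
      rw [inv_le_comm₀ (by linarith) (by norm_num)]
      simpa using h2m
    have hlow : ε * (r ^ m)⁻¹ ≤ q r := by
      have hGexp : q (2*r) + (a/(m:ℝ)) * ((2*r) ^ m)⁻¹ ≤ q r + (a/(m:ℝ)) * (r ^ m)⁻¹ := hGle
      have hdiff : (1/2) * (r ^ m)⁻¹ ≤ (r ^ m)⁻¹ - ((2*r) ^ m)⁻¹ := by linarith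
      have key := mul_le_mul_of_nonneg_left hdiff hcpos.le
      have he1 : (a/(m:ℝ)) * ((2*r) ^ m)⁻¹ - (a/(m:ℝ)) * (r ^ m)⁻¹
          = c * ((r ^ m)⁻¹ - ((2*r) ^ m)⁻¹) := by rw [hc]; ring
      have he2 : ε * (r ^ m)⁻¹ = c * ((1/2) * (r ^ m)⁻¹) := by
        rw [hε]; ring
      linarith
    have hup : q r ≤ C * Real.exp (-κ * r ^ (2/(d:ℝ))) := hbd r (by
      have : R₁ ≤ r₂ := le_trans hMR₁ hr₂M
      linarith)
    have h5 : ε * (r ^ m)⁻¹ * r ^ m ≤ C * Real.exp (-κ * r ^ (2/(d:ℝ))) * r ^ m :=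
      mul_le_mul_of_nonneg_right (hlow.trans hup) hrm.le
    have h6 : ε * (r ^ m)⁻¹ * r ^ m = ε := by field_simp
    calc ε = ε * (r ^ m)⁻¹ * r ^ m := h6.symm
    _ ≤ C * Real.exp (-κ * r ^ (2/(d:ℝ))) * r ^ m := h5
    _ = C * (r ^ m * Real.exp (-κ * r ^ (2/(d:ℝ)))) := by ring
end

section
/- Let p ≥ 1 and d ≥ 1 be integers and let π be a probability measure on ℝ^p such that for some constants K, c, r₀ > 0 one has π({θ ∈ ℝ^p : ‖θ‖ > r/2}) ≤ K·exp(−c·r^{2/d}) for all r ≥ r₀. Define the Gaussian marginal density m(y) = ∫_{ℝ^p} (2π)^{−p/2}·exp(−‖y−θ‖²/2) dπ(θ). Then there exist constants C > 0 and κ > 0 such that m(y) ≤ C·exp(−κ·‖y‖^{2/d}) for all y ∈ ℝ^p. -/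
open MeasureTheory
set_option maxHeartbeats 2000000 in

/-- Lemma 2.3 (core estimate): if the prior `P` on `ℝ^p` has stretched-exponential
tails `P(‖θ‖ > r/2) ≤ K exp(-c r^(2/d))` for all large `r`, then the Gaussian
marginal density `m(y) = ∫ (2π)^(-p/2) exp(-‖y-θ‖²/2) dP(θ)` satisfies
`m(y) ≤ C exp(-κ ‖y‖^(2/d))` for some constants `C, κ > 0`. -/
theorem stmt3 (p d : ℕ) (hp : 1 ≤ p) (hd : 1 ≤ d)
    (P : Measure (EuclideanSpace ℝ (Fin p))) [IsProbabilityMeasure P]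
    (K c r₀ : ℝ) (hK : 0 < K) (hc : 0 < c) (hr₀ : 0 < r₀)
    (htail : ∀ r ≥ r₀,
      (P {θ : EuclideanSpace ℝ (Fin p) | r / 2 < ‖θ‖}).toReal ≤
        K * Real.exp (-c * r ^ (2 / (d : ℝ))))
    (m : EuclideanSpace ℝ (Fin p) → ℝ)
    (hm : ∀ y, m y =
      ∫ θ, (2 * Real.pi) ^ (-(p : ℝ) / 2) * Real.exp (-‖y - θ‖ ^ 2 / 2) ∂P) :
    ∃ C > 0, ∃ κ > 0, ∀ y, m y ≤ C * Real.exp (-κ * ‖y‖ ^ (2 / (d : ℝ))) := by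
  set A : ℝ := (2 * Real.pi) ^ (-(p : ℝ) / 2) with hAdef
  have hApos : 0 < A := Real.rpow_pos_of_pos (by positivity) _
  set κ : ℝ := min (1/8) c with hκdef
  have hκpos : 0 < κ := lt_min (by norm_num) hc
  set R : ℝ := max r₀ 1 with hRdef
  have hR1 : 1 ≤ R := le_max_right _ _
  have hRr₀ : r₀ ≤ R := le_max_left _ _
  set C : ℝ := A * (1 + K) * Real.exp (κ * R ^ (2 / (d : ℝ))) with hCdef
  have hCpos : 0 < C := by positivity
  refine ⟨C, hCpos, κ, hκpos, fun y => ?_⟩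
  set r : ℝ := ‖y‖ with hrdef
  have hr0 : 0 ≤ r := norm_nonneg y
  have hdpos : (0:ℝ) < d := by exact_mod_cast hd
  have hed : 0 < 2 / (d:ℝ) := by positivity
  have hed2 : 2 / (d:ℝ) ≤ 2 := by
    rw [div_le_iff₀ hdpos]
    nlinarith [hdpos, (by exact_mod_cast hd : (1:ℝ) ≤ d)]
  -- the integrand
  set f : EuclideanSpace ℝ (Fin p) → ℝ := fun θ => A * Real.exp (-‖y - θ‖ ^ 2 / 2)
    with hfdef
  have hfnn : ∀ θ, 0 ≤ f θ := fun θ => by positivity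
  have hfb : ∀ θ, ‖f θ‖ ≤ A := by
    intro θ
    rw [Real.norm_eq_abs, abs_of_nonneg (hfnn θ)]
    calc A * Real.exp (-‖y - θ‖ ^ 2 / 2) ≤ A * 1 := by
          gcongr
          exact Real.exp_le_one_iff.mpr (by nlinarith [sq_nonneg ‖y - θ‖])
      _ = A := mul_one A
  have hfc : Continuous f := by
    apply Continuous.mul continuous_const
    exact Real.continuous_exp.comp (by fun_prop)
  have hfm : AEStronglyMeasurable f P := hfc.aestronglyMeasurable
  have hfi : Integrable f P := by
    refine (integrable_const A).mono' hfm ?_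
    exact Filter.Eventually.of_forall hfb
  have hmy : m y = ∫ θ, f θ ∂P := hm y
  -- the split set
  set S : Set (EuclideanSpace ℝ (Fin p)) := {θ | ‖θ‖ ≤ r / 2} with hSdef
  have hS : MeasurableSet S := measurableSet_le measurable_norm measurable_const
  have hSc : Sᶜ = {θ : EuclideanSpace ℝ (Fin p) | r / 2 < ‖θ‖} := by
    ext θ; simp [hSdef, not_le]
  have hPS1 : (P S).toReal ≤ 1 := by
    calc (P S).toReal ≤ (P Set.univ).toReal :=
          ENNReal.toReal_mono (measure_ne_top _ _) (measure_mono (Set.subset_univ _))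
      _ = 1 := by simp
  -- bound on S : there ‖y - θ‖ ≥ r/2
  have hbS : ∫ θ in S, f θ ∂P ≤ A * Real.exp (-(r ^ 2) / 8) := by
    have hb : ∀ θ ∈ S, ‖f θ‖ ≤ A * Real.exp (-(r ^ 2) / 8) := by
      intro θ hθ
      have hθ' : ‖θ‖ ≤ r / 2 := hθ
      have h1 : r / 2 ≤ ‖y - θ‖ := by
        have := norm_sub_norm_le y θ
        rw [← hrdef] at this
        linarith
      have h2 : r ^ 2 / 4 ≤ ‖y - θ‖ ^ 2 := by
        have := sq_le_sq' (by linarith [norm_nonneg (y - θ)]) h1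
        nlinarith [this]
      rw [Real.norm_eq_abs, abs_of_nonneg (hfnn θ)]
      have hE : Real.exp (-‖y - θ‖ ^ 2 / 2) ≤ Real.exp (-(r ^ 2) / 8) :=
        Real.exp_le_exp.mpr (by linarith)
      exact mul_le_mul_of_nonneg_left hE hApos.le
    calc ∫ θ in S, f θ ∂P ≤ ‖∫ θ in S, f θ ∂P‖ := le_abs_self _
      _ ≤ (A * Real.exp (-(r ^ 2) / 8)) * (P S).toReal :=
          norm_setIntegral_le_of_norm_le_const (measure_lt_top _ _) hb
      _ ≤ (A * Real.exp (-(r ^ 2) / 8)) * 1 :=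
          mul_le_mul_of_nonneg_left hPS1 (by positivity)
      _ = A * Real.exp (-(r ^ 2) / 8) := mul_one _
  -- bound on Sᶜ
  have hbSc : ∫ θ in Sᶜ, f θ ∂P ≤ A * (P Sᶜ).toReal := by
    calc ∫ θ in Sᶜ, f θ ∂P ≤ ‖∫ θ in Sᶜ, f θ ∂P‖ := le_abs_self _
      _ ≤ A * (P Sᶜ).toReal :=
          norm_setIntegral_le_of_norm_le_const (measure_lt_top _ _)
            (fun θ _ => hfb θ)
  have hsplit : m y = ∫ θ in S, f θ ∂P + ∫ θ in Sᶜ, f θ ∂P := by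
    rw [hmy, integral_add_compl hS hfi]
  by_cases hcase : R ≤ r
  · -- large r
    have hr1 : 1 ≤ r := le_trans hR1 hcase
    have htail' := htail r (le_trans hRr₀ hcase)
    rw [← hSc] at htail'
    have hrp : r ^ (2 / (d:ℝ)) ≤ r ^ 2 := by
      have := Real.rpow_le_rpow_of_exponent_le hr1 hed2
      rwa [Real.rpow_two] at this
    have h1 : Real.exp (-(r ^ 2) / 8) ≤ Real.exp (-κ * r ^ (2 / (d:ℝ))) := by
      apply Real.exp_le_exp.mpr
      have hκ8 : κ ≤ 1/8 := min_le_left _ _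
      nlinarith [Real.rpow_nonneg hr0 (2 / (d:ℝ))]
    have h2 : K * Real.exp (-c * r ^ (2 / (d:ℝ))) ≤
        K * Real.exp (-κ * r ^ (2 / (d:ℝ))) := by
      have hκc : κ ≤ c := min_le_right _ _
      have h2' : Real.exp (-c * r ^ (2 / (d:ℝ))) ≤
          Real.exp (-κ * r ^ (2 / (d:ℝ))) := by
        apply Real.exp_le_exp.mpr
        nlinarith [Real.rpow_nonneg hr0 (2 / (d:ℝ))]
      exact mul_le_mul_of_nonneg_left h2' hK.le
    have hexp1 : (1:ℝ) ≤ Real.exp (κ * R ^ (2 / (d:ℝ))) := by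
      apply Real.one_le_exp
      positivity
    calc m y = ∫ θ in S, f θ ∂P + ∫ θ in Sᶜ, f θ ∂P := hsplit
      _ ≤ A * Real.exp (-(r ^ 2) / 8) + A * (K * Real.exp (-c * r ^ (2 / (d:ℝ)))) :=
          add_le_add hbS
            (le_trans hbSc (mul_le_mul_of_nonneg_left htail' hApos.le))
      _ ≤ A * Real.exp (-κ * r ^ (2 / (d:ℝ))) +
            A * (K * Real.exp (-κ * r ^ (2 / (d:ℝ)))) :=
          add_le_add (mul_le_mul_of_nonneg_left h1 hApos.le)
            (mul_le_mul_of_nonneg_left h2 hApos.le)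
      _ = A * (1 + K) * Real.exp (-κ * r ^ (2 / (d:ℝ))) := by ring
      _ ≤ C * Real.exp (-κ * r ^ (2 / (d:ℝ))) := by
          have hAC : A * (1 + K) ≤ C := by
            rw [hCdef]
            nlinarith [hexp1, hApos, hK]
          exact mul_le_mul_of_nonneg_right hAC (Real.exp_nonneg _)
  · -- small r
    rw [not_le] at hcase
    have hrR : r ^ (2 / (d:ℝ)) ≤ R ^ (2 / (d:ℝ)) :=
      Real.rpow_le_rpow hr0 hcase.le hed.le
    have hmA : m y ≤ A := by
      calc m y = ∫ θ in S, f θ ∂P + ∫ θ in Sᶜ, f θ ∂P := hsplit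
        _ = ∫ θ, f θ ∂P := integral_add_compl hS hfi
        _ ≤ ‖∫ θ, f θ ∂P‖ := le_abs_self _
        _ ≤ A * (P Set.univ).toReal := by
            rw [← setIntegral_univ]
            exact norm_setIntegral_le_of_norm_le_const (measure_lt_top _ _)
              (fun θ _ => hfb θ)
        _ = A := by rw [measure_univ, ENNReal.toReal_one, mul_one]
    calc m y ≤ A := hmA
      _ ≤ C * Real.exp (-κ * r ^ (2 / (d:ℝ))) := by
          have hE : (1:ℝ) ≤ Real.exp (κ * R ^ (2 / (d:ℝ))) *
              Real.exp (-κ * r ^ (2 / (d:ℝ))) := by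
            rw [← Real.exp_add]
            apply Real.one_le_exp
            nlinarith [hrR, hκpos]
          calc A = A * 1 := (mul_one A).symm
            _ ≤ A * ((1 + K) * (Real.exp (κ * R ^ (2 / (d:ℝ))) *
                Real.exp (-κ * r ^ (2 / (d:ℝ))))) := by
                apply mul_le_mul_of_nonneg_left ?_ hApos.le
                calc (1:ℝ) = 1 * 1 := (one_mul 1).symm
                  _ ≤ (1 + K) * (Real.exp (κ * R ^ (2 / (d:ℝ))) *
                      Real.exp (-κ * r ^ (2 / (d:ℝ)))) :=
                    mul_le_mul (by linarith) hE zero_le_one (by linarith)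
            _ = C * Real.exp (-κ * r ^ (2 / (d:ℝ))) := by rw [hCdef]; ring
end

section
/- Let p ≥ 1 be an integer and let μ be a nonzero finite (Borel) measure on [0,∞). For u > 0 define D(u) = ∫_{[0,∞)} (1+v)^{−p/2}·exp(−u/(2(1+v))) dμ(v), N(u) = ∫_{[0,∞)} (1+v)^{−p/2−1}·exp(−u/(2(1+v))) dμ(v), M(u) = ∫_{[0,∞)} (1+v)^{−p/2−2}·exp(−u/(2(1+v))) dμ(v), and ψ(u) = N(u)/D(u). Then D(u) > 0 for all u > 0, D is differentiable on (0,∞) with D'(u) = −N(u)/2, ψ is differentiable on (0,∞) with ψ'(u) = −(1/2)·(M(u)/D(u) − (N(u)/D(u))²), and −ψ(u)/2 ≤ ψ'(u) ≤ 0 for all u > 0. -/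
open MeasureTheory

namespace Stmt8Aux

noncomputable def F (c u v : ℝ) : ℝ := (1 + v) ^ c * Real.exp (-u / (2 * (1 + v)))

lemma F_meas (c u : ℝ) : Measurable (F c u) := by
  unfold F
  fun_prop

lemma F_pos (c u : ℝ) {v : ℝ} (hv : 0 ≤ v) : 0 < F c u v :=
  mul_pos (Real.rpow_pos_of_pos (by linarith) c) (Real.exp_pos _)

lemma F_le_one {c u : ℝ} (hc : c ≤ 0) (hu : 0 ≤ u) {v : ℝ} (hv : 0 ≤ v) : F c u v ≤ 1 := by
  have h1v : (0:ℝ) < 1 + v := by linarith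
  have h1 : (1 + v) ^ c ≤ 1 := Real.rpow_le_one_of_one_le_of_nonpos (by linarith) hc
  have h2 : Real.exp (-u / (2 * (1 + v))) ≤ 1 := by
    rw [Real.exp_le_one_iff]
    apply div_nonpos_of_nonpos_of_nonneg <;> linarith
  calc F c u v ≤ (1+v) ^ c * 1 := by
        unfold F
        exact mul_le_mul_of_nonneg_left h2 (Real.rpow_pos_of_pos h1v c).le
    _ ≤ 1 := by simpa using h1

lemma F_abs_le_one {c u : ℝ} (hc : c ≤ 0) (hu : 0 ≤ u) {v : ℝ} (hv : 0 ≤ v) :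
    ‖F c u v‖ ≤ 1 := by
  rw [Real.norm_eq_abs, abs_of_pos (F_pos c u hv)]
  exact F_le_one hc hu hv

lemma F_int {μ : Measure ℝ} [IsFiniteMeasure μ] (hv0 : ∀ᵐ v ∂μ, 0 ≤ v)
    {c u : ℝ} (hc : c ≤ 0) (hu : 0 ≤ u) : Integrable (F c u) μ :=
  (integrable_const 1).mono' (F_meas c u).aestronglyMeasurable
    (hv0.mono fun v hv => F_abs_le_one hc hu hv)

lemma F_memℒ2 {μ : Measure ℝ} [IsFiniteMeasure μ] (hv0 : ∀ᵐ v ∂μ, 0 ≤ v)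
    {c u : ℝ} (hc : c ≤ 0) (hu : 0 ≤ u) : MemLp (F c u) (ENNReal.ofReal 2) μ :=
  MemLp.of_bound (F_meas c u).aestronglyMeasurable 1
    (hv0.mono fun v hv => F_abs_le_one hc hu hv)

lemma F_hasDeriv (c : ℝ) {v : ℝ} (hv : 0 ≤ v) (u : ℝ) :
    HasDerivAt (fun u => F c u v) (-(1/2) * F (c-1) u v) u := by
  have h1v : (0:ℝ) < 1 + v := by linarith
  have ha : (2 * (1 + v)) ≠ 0 := by positivity
  have h1 : HasDerivAt (fun u : ℝ => -u / (2 * (1 + v))) (-1 / (2 * (1 + v))) u :=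
    (hasDerivAt_id u).neg.div_const _
  have h2 := (h1.exp).const_mul ((1 + v) ^ c)
  refine h2.congr_deriv ?_
  unfold F
  rw [Real.rpow_sub_one (ne_of_gt h1v)]
  field_simp

/-- differentiation under the integral sign -/
lemma hasDeriv_int (μ : Measure ℝ) [IsFiniteMeasure μ] (hv0 : ∀ᵐ v ∂μ, 0 ≤ v)
    {c : ℝ} (hc : c ≤ 0) {u₀ : ℝ} (hu : 0 < u₀) :
    HasDerivAt (fun u => ∫ v, F c u v ∂μ) (-(1/2) * ∫ v, F (c-1) u₀ v ∂μ) u₀ := by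
  have key := hasDerivAt_integral_of_dominated_loc_of_deriv_le (μ := μ)
    (F := fun u v => F c u v) (F' := fun u v => -(1/2) * F (c-1) u v)
    (bound := fun _ => 1/2) (x₀ := u₀) (Metric.ball_mem_nhds u₀ hu)
    (Filter.Eventually.of_forall fun u => (F_meas c u).aestronglyMeasurable)
    (F_int hv0 hc hu.le)
    ((measurable_const.mul (F_meas (c-1) u₀)).aestronglyMeasurable)
    (hv0.mono fun v hv => by
      intro u hu'
      have hu0 : 0 ≤ u := by
        have := Metric.mem_ball.mp hu'
        rw [Real.dist_eq, abs_lt] at this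
        linarith [this.1]
      rw [norm_mul]
      have h1 : ‖F (c-1) u v‖ ≤ 1 := F_abs_le_one (by linarith) hu0 hv
      have h2 : ‖(-(1/2) : ℝ)‖ = 1/2 := by norm_num
      rw [h2]
      nlinarith [norm_nonneg (F (c-1) u v)])
    (integrable_const _)
    (hv0.mono fun v hv => fun u _ => F_hasDeriv c hv u)
  have := key.2
  rwa [integral_const_mul] at this

end Stmt8Aux

open Stmt8Aux

/-- Properties of the shrinkage function from the proof of Theorem 2.6: with `μ` a
nonzero finite Borel measure on `[0,∞)` and
`D(u) = ∫ (1+v)^(-p/2) e^(-u/(2(1+v))) dμ`,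
`N(u) = ∫ (1+v)^(-p/2-1) e^(-u/(2(1+v))) dμ`,
`M(u) = ∫ (1+v)^(-p/2-2) e^(-u/(2(1+v))) dμ`, `ψ = N/D`, one has `D > 0` on
`(0,∞)`, `D' = -N/2`, `ψ' = -(1/2)(M/D - (N/D)²)`, and `-ψ/2 ≤ ψ' ≤ 0`. -/
theorem stmt8 (p : ℕ) (hp : 1 ≤ p) (μ : Measure ℝ) [IsFiniteMeasure μ]
    (hμ_ne : μ ≠ 0) (hμ_supp : μ (Set.Iio 0) = 0)
    (D N M ψ : ℝ → ℝ)
    (hD : ∀ u, D u = ∫ v, (1 + v) ^ (-(p : ℝ) / 2) * Real.exp (-u / (2 * (1 + v))) ∂μ)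
    (hN : ∀ u, N u = ∫ v, (1 + v) ^ (-(p : ℝ) / 2 - 1) * Real.exp (-u / (2 * (1 + v))) ∂μ)
    (hM : ∀ u, M u = ∫ v, (1 + v) ^ (-(p : ℝ) / 2 - 2) * Real.exp (-u / (2 * (1 + v))) ∂μ)
    (hψ : ∀ u, ψ u = N u / D u) :
    (∀ u, 0 < u → 0 < D u) ∧
    (∀ u, 0 < u → HasDerivAt D (-(N u) / 2) u) ∧
    (∀ u, 0 < u → HasDerivAt ψ (-(1 / 2) * (M u / D u - (N u / D u) ^ 2)) u) ∧
    (∀ u, 0 < u → -(ψ u) / 2 ≤ deriv ψ u ∧ deriv ψ u ≤ 0) := by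
  have hv0 : ∀ᵐ v ∂μ, 0 ≤ v := by
    rw [ae_iff]
    convert hμ_supp using 2
    ext v; simp [not_le]
  set α : ℝ := -(p : ℝ) / 2 with hα
  have hα0 : α ≤ 0 := by
    rw [hα]
    have : (0:ℝ) ≤ (p:ℝ) := Nat.cast_nonneg p
    linarith
  have hDf : D = fun u => ∫ v, F α u v ∂μ := by funext u; rw [hD]; rfl
  have hNf : ∀ u, N u = ∫ v, F (α - 1) u v ∂μ := by
    intro u; rw [hN]
    congr 1
  have hMf : ∀ u, M u = ∫ v, F (α - 1 - 1) u v ∂μ := by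
    intro u; rw [hM]
    unfold F
    rw [show (-(p : ℝ) / 2 - 1 - 1) = -(p : ℝ) / 2 - 2 from by ring]
  -- positivity
  have hDpos : ∀ u, 0 < u → 0 < D u := by
    intro u hu
    rw [hDf]
    rw [integral_pos_iff_support_of_nonneg_ae
      (hv0.mono fun v hv => (F_pos α u hv).le) (F_int hv0 hα0 hu.le)]
    have hsub : Set.Ici (0:ℝ) ⊆ Function.support (F α u) :=
      fun v hv => ne_of_gt (F_pos α u hv)
    have hIci : 0 < μ (Set.Ici (0:ℝ)) := by
      by_contra h
      push_neg at h
      have h0 : μ (Set.Ici (0:ℝ)) = 0 := le_antisymm h zero_le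
      apply hμ_ne
      have : μ Set.univ = 0 := by
        have : μ Set.univ ≤ μ (Set.Iio 0) + μ (Set.Ici 0) := by
          rw [← Set.Iio_union_Ici]
          exact measure_union_le _ _
        simpa [hμ_supp, h0] using this
      exact Measure.measure_univ_eq_zero.mp this
    exact lt_of_lt_of_le hIci (measure_mono hsub)
  -- derivatives
  have hD' : ∀ u, 0 < u → HasDerivAt D (-(N u) / 2) u := by
    intro u hu
    have := hasDeriv_int μ hv0 hα0 hu
    rw [← hDf] at this
    convert this using 1
    rw [hNf u]
    ring
  have hN' : ∀ u, 0 < u → HasDerivAt N (-(M u) / 2) u := by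
    intro u hu
    have := hasDeriv_int μ hv0 (by linarith : α - 1 ≤ 0) hu
    have hNfun : N = fun u => ∫ v, F (α - 1) u v ∂μ := funext hNf
    rw [← hNfun] at this
    convert this using 1
    rw [hMf u]
    ring
  have hψfun : ψ = fun u => N u / D u := funext hψ
  have hψ' : ∀ u, 0 < u → HasDerivAt ψ (-(1 / 2) * (M u / D u - (N u / D u) ^ 2)) u := by
    intro u hu
    have hd := (hN' u hu).div (hD' u hu) (ne_of_gt (hDpos u hu))
    rw [show N / D = ψ by rw [hψfun]; rfl] at hd
    refine hd.congr_deriv ?_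
    have hDne : D u ≠ 0 := ne_of_gt (hDpos u hu)
    field_simp
    ring
  refine ⟨hDpos, hD', hψ', ?_⟩
  intro u hu
  have hdψ : deriv ψ u = -(1 / 2) * (M u / D u - (N u / D u) ^ 2) := (hψ' u hu).deriv
  have hDu := hDpos u hu
  -- nonnegativity of the integrals
  have hint : ∀ c : ℝ, c ≤ 0 → (0:ℝ) ≤ ∫ v, F c u v ∂μ :=
    fun c hc => integral_nonneg_of_ae (hv0.mono fun v hv => (F_pos c u hv).le)
  have hNnn : 0 ≤ N u := by rw [hNf]; exact hint _ (by linarith)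
  have hMnn : 0 ≤ M u := by rw [hMf]; exact hint _ (by linarith)
  -- M ≤ N
  have hMN : M u ≤ N u := by
    rw [hMf, hNf]
    apply integral_mono_ae (F_int hv0 (by linarith) hu.le) (F_int hv0 (by linarith) hu.le)
    filter_upwards [hv0] with v hv
    unfold F
    have h1v : (1:ℝ) ≤ 1 + v := by linarith
    exact mul_le_mul_of_nonneg_right
      (Real.rpow_le_rpow_of_exponent_le h1v (by linarith)) (Real.exp_pos _).le
  -- Cauchy-Schwarz : N u ^ 2 ≤ M u * D u
  have hCS : N u ^ 2 ≤ M u * D u := by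
    set f := F (α/2) (u/2) with hfdef
    set g := F (α/2 - 1) (u/2) with hgdef
    have hfg : ∀ᵐ v ∂μ, f v * g v = F (α - 1) u v := by
      filter_upwards [hv0] with v hv
      have h1v : (0:ℝ) < 1 + v := by linarith
      rw [hfdef, hgdef]
      unfold F
      rw [mul_mul_mul_comm, ← Real.rpow_add h1v, ← Real.exp_add]
      congr 1
      · congr 1; ring
      · congr 1; field_simp; ring
    have hf2 : ∀ᵐ v ∂μ, f v ^ (2:ℝ) = F α u v := by
      filter_upwards [hv0] with v hv
      have h1v : (0:ℝ) < 1 + v := by linarith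
      rw [hfdef, Real.rpow_two, sq]
      unfold F
      rw [mul_mul_mul_comm, ← Real.rpow_add h1v, ← Real.exp_add]
      congr 1
      · congr 1; ring
      · congr 1; field_simp; ring
    have hg2 : ∀ᵐ v ∂μ, g v ^ (2:ℝ) = F (α - 1 - 1) u v := by
      filter_upwards [hv0] with v hv
      have h1v : (0:ℝ) < 1 + v := by linarith
      rw [hgdef, Real.rpow_two, sq]
      unfold F
      rw [mul_mul_mul_comm, ← Real.rpow_add h1v, ← Real.exp_add]
      congr 1
      · congr 1; ring
      · congr 1; field_simp; ring
    have hconj : Real.HolderConjugate 2 2 := Real.HolderConjugate.two_two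
    have hholder := integral_mul_le_Lp_mul_Lq_of_nonneg (μ := μ) hconj
      (hv0.mono fun v hv => (F_pos _ _ hv).le)
      (hv0.mono fun v hv => (F_pos _ _ hv).le)
      (F_memℒ2 (c := α/2) (u := u/2) hv0 (by linarith) (by linarith))
      (F_memℒ2 (c := α/2 - 1) (u := u/2) hv0 (by linarith) (by linarith))
    rw [integral_congr_ae hfg, integral_congr_ae hf2, integral_congr_ae hg2] at hholder
    have hDu' : D u = ∫ v, F α u v ∂μ := by rw [hDf]
    rw [← hNf u, ← hDu', ← hMf u] at hholder
    have hsq := pow_le_pow_left₀ hNnn hholder 2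
    calc N u ^ 2 ≤ (D u ^ ((1:ℝ)/2) * M u ^ ((1:ℝ)/2)) ^ 2 := hsq
      _ = M u * D u := by
          rw [mul_pow, ← Real.rpow_natCast (D u ^ ((1:ℝ)/2)),
            ← Real.rpow_natCast (M u ^ ((1:ℝ)/2)), ← Real.rpow_mul hDu.le,
            ← Real.rpow_mul hMnn]
          norm_num
          ring
    -- done
  constructor
  · -- -ψ u / 2 ≤ deriv ψ u
    rw [hdψ, hψ u]
    have h1 : M u / D u ≤ N u / D u := by gcongr
    nlinarith [sq_nonneg (N u / D u)]
  · -- deriv ψ u ≤ 0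
    rw [hdψ]
    have h2 : (N u / D u) ^ 2 ≤ M u / D u := by
      rw [div_pow, div_le_div_iff₀ (by positivity) hDu]
      nlinarith
    linarith
end

section
/- Let n ≥ 1 be an integer, r ∈ (0,1), and let s ∈ (0,∞)^n satisfy ‖s − 𝟏‖ ≤ r, where 𝟏 = (1,…,1) and ‖·‖ is the Euclidean norm. Define A(s) = ∑_{ℓ=1}^n s_ℓ + (∏_{ℓ=1}^n s_ℓ)^{−1}. Then (n+1) + (1/2)·(1+r)^{−(n+2)}·‖s−𝟏‖² ≤ A(s) ≤ (n+1) + (1/2)·(n+1)·(1−r)^{−(n+2)}·‖s−𝟏‖². -/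
open Finset

/-- If `f` has derivative `f'` on `[0,1]` with `f'` nonneg on the interior,
then `f` is monotone on `[0,1]`. -/
lemma stmt10_aux_mono {f f' : ℝ → ℝ}
    (hd : ∀ t ∈ Set.Icc (0:ℝ) 1, HasDerivAt f (f' t) t)
    (h0 : ∀ t ∈ Set.Ioo (0:ℝ) 1, 0 ≤ f' t) : MonotoneOn f (Set.Icc (0:ℝ) 1) := by
  apply monotoneOn_of_deriv_nonneg (convex_Icc (0:ℝ) 1)
    (fun t ht => (hd t ht).continuousAt.continuousWithinAt)
  · intro t ht
    rw [interior_Icc] at ht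
    exact (hd t (Set.Ioo_subset_Icc_self ht)).differentiableAt.differentiableWithinAt
  · intro t ht
    rw [interior_Icc] at ht
    rw [(hd t (Set.Ioo_subset_Icc_self ht)).deriv]
    exact h0 t ht

/-- Two-sided quadratic expansion of `A(s) = ∑ sₗ + (∏ sₗ)⁻¹` around the all-ones
vector (proof of Theorem 2.6): for `r ∈ (0,1)` and `s ∈ (0,∞)ⁿ` with Euclidean
distance `‖s - 𝟏‖ ≤ r`,
`(n+1) + (1/2)(1+r)^-(n+2) ‖s-𝟏‖² ≤ A(s) ≤ (n+1) + (1/2)(n+1)(1-r)^-(n+2) ‖s-𝟏‖²`. -/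
theorem stmt10 (n : ℕ) (hn : 1 ≤ n) (r : ℝ) (hr : r ∈ Set.Ioo (0 : ℝ) 1)
    (s : Fin n → ℝ) (hs : ∀ i, 0 < s i)
    (hball : Real.sqrt (∑ i, (s i - 1) ^ 2) ≤ r) :
    ((n : ℝ) + 1) + 1 / 2 * (1 + r) ^ (-((n : ℝ) + 2)) * (∑ i, (s i - 1) ^ 2) ≤
        (∑ i, s i) + (∏ i, s i)⁻¹ ∧
      (∑ i, s i) + (∏ i, s i)⁻¹ ≤
        ((n : ℝ) + 1) +
          1 / 2 * ((n : ℝ) + 1) * (1 - r) ^ (-((n : ℝ) + 2)) * (∑ i, (s i - 1) ^ 2) := by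
  obtain ⟨hr0, hr1⟩ := hr
  set Q : ℝ := ∑ i, (s i - 1) ^ 2 with hQdef
  clear_value Q
  have hQ0 : 0 ≤ Q := by rw [hQdef]; positivity
  have hQr : Q ≤ r ^ 2 := by
    nlinarith [Real.sq_sqrt hQ0, Real.sqrt_nonneg Q, hball]
  have hxr : ∀ i, -r ≤ s i - 1 ∧ s i - 1 ≤ r := by
    intro i
    have h1 : (s i - 1) ^ 2 ≤ Q := by
      rw [hQdef]
      exact Finset.single_le_sum (f := fun j => (s j - 1) ^ 2)
        (fun j _ => sq_nonneg _) (Finset.mem_univ i)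
    constructor <;> nlinarith [sq_nonneg (s i - 1 + r), sq_nonneg (s i - 1 - r)]
  have hband : ∀ t ∈ Set.Icc (0:ℝ) 1, ∀ i,
      1 - r ≤ 1 + t * (s i - 1) ∧ 1 + t * (s i - 1) ≤ 1 + r := by
    intro t ht i
    obtain ⟨h1, h2⟩ := hxr i
    constructor
    · nlinarith [ht.1, ht.2]
    · nlinarith [ht.1, ht.2]
  have hpos : ∀ t ∈ Set.Icc (0:ℝ) 1, ∀ i, 0 < 1 + t * (s i - 1) := by
    intro t ht i
    have := (hband t ht i).1
    linarith
  set E : ℝ → ℝ := fun t => Real.exp (-∑ i, Real.log (1 + t * (s i - 1))) with hEdef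
  set D1 : ℝ → ℝ := fun t => ∑ i, (s i - 1) / (1 + t * (s i - 1)) with hD1def
  set D2 : ℝ → ℝ := fun t => ∑ i, ((s i - 1) / (1 + t * (s i - 1))) ^ 2 with hD2def
  set g : ℝ → ℝ := fun t => (∑ i, (1 + t * (s i - 1))) + E t with hgdef
  set g' : ℝ → ℝ := fun t => (∑ i, (s i - 1)) - D1 t * E t with hg'def
  set g'' : ℝ → ℝ := fun t => ((D1 t) ^ 2 + D2 t) * E t with hg''def
  clear_value E D1 D2 g g' g''
  have hEpos : ∀ t, 0 < E t := fun t => by rw [hEdef]; exact Real.exp_pos _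
  have hlin : ∀ (i : Fin n) (t : ℝ), HasDerivAt (fun u : ℝ => 1 + u * (s i - 1)) (s i - 1) t := by
    intro i t
    simpa using ((hasDerivAt_id t).mul_const (s i - 1)).const_add 1
  have hdE : ∀ t ∈ Set.Icc (0:ℝ) 1, HasDerivAt E (-(D1 t) * E t) t := by
    intro t ht
    have hsum : HasDerivAt (fun u => ∑ i, Real.log (1 + u * (s i - 1))) (D1 t) t := by
      rw [hD1def]
      exact HasDerivAt.fun_sum fun i _ => (hlin i t).log (hpos t ht i).ne'
    have := hsum.fun_neg.exp
    rw [hEdef]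
    convert this using 1
    ring
  have hdg : ∀ t ∈ Set.Icc (0:ℝ) 1, HasDerivAt g (g' t) t := by
    intro t ht
    have hsum : HasDerivAt (fun u => ∑ i, (1 + u * (s i - 1))) (∑ i, (s i - 1)) t :=
      HasDerivAt.fun_sum fun i _ => hlin i t
    have := hsum.fun_add (hdE t ht)
    rw [hgdef, hg'def]
    refine this.congr_deriv ?_
    ring
  have hdD1 : ∀ t ∈ Set.Icc (0:ℝ) 1, HasDerivAt D1 (-(D2 t)) t := by
    intro t ht
    have h : ∀ i : Fin n, HasDerivAt (fun u : ℝ => (s i - 1) / (1 + u * (s i - 1)))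
        ((0 * (1 + t * (s i - 1)) - (s i - 1) * (s i - 1)) / (1 + t * (s i - 1)) ^ 2) t :=
      fun i => (hasDerivAt_const t (s i - 1)).div (hlin i t) (hpos t ht i).ne'
    have := HasDerivAt.fun_sum (fun i (_ : i ∈ Finset.univ) => h i)
    rw [hD1def]
    refine this.congr_deriv ?_
    rw [hD2def, ← Finset.sum_neg_distrib]
    apply Finset.sum_congr rfl
    intro i _
    rw [div_pow]
    ring
  have hdg' : ∀ t ∈ Set.Icc (0:ℝ) 1, HasDerivAt g' (g'' t) t := by
    intro t ht
    have := ((hdD1 t ht).fun_mul (hdE t ht)).const_sub (∑ i, (s i - 1))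
    rw [hg'def, hg''def]
    refine this.congr_deriv ?_
    ring
  have hg'0 : g' 0 = 0 := by
    simp [hg'def, hD1def, hEdef]
  -- bounds on E
  have hElow : ∀ t ∈ Set.Icc (0:ℝ) 1, ((1 + r) ^ n)⁻¹ ≤ E t := by
    intro t ht
    have hsum : (∑ i, Real.log (1 + t * (s i - 1))) ≤ (n : ℝ) * Real.log (1 + r) := by
      calc (∑ i, Real.log (1 + t * (s i - 1))) ≤ ∑ _i : Fin n, Real.log (1 + r) :=
            Finset.sum_le_sum fun i _ =>
              Real.log_le_log (hpos t ht i) (hband t ht i).2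
        _ = (n : ℝ) * Real.log (1 + r) := by simp [mul_comm]
    have : Real.exp (-((n : ℝ) * Real.log (1 + r))) ≤ E t := by
      rw [hEdef]
      exact Real.exp_le_exp.mpr (by linarith)
    rwa [Real.exp_neg, Real.exp_nat_mul, Real.exp_log (by linarith)] at this
  have hEhigh : ∀ t ∈ Set.Icc (0:ℝ) 1, E t ≤ ((1 - r) ^ n)⁻¹ := by
    intro t ht
    have hsum : (n : ℝ) * Real.log (1 - r) ≤ ∑ i, Real.log (1 + t * (s i - 1)) := by
      calc (n : ℝ) * Real.log (1 - r) = ∑ _i : Fin n, Real.log (1 - r) := by simp [mul_comm]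
        _ ≤ ∑ i, Real.log (1 + t * (s i - 1)) :=
            Finset.sum_le_sum fun i _ =>
              Real.log_le_log (by linarith) (hband t ht i).1
    have : E t ≤ Real.exp (-((n : ℝ) * Real.log (1 - r))) := by
      rw [hEdef]
      exact Real.exp_le_exp.mpr (by linarith)
    rwa [Real.exp_neg, Real.exp_nat_mul, Real.exp_log (by linarith)] at this
  -- bounds on D2
  have hD2low : ∀ t ∈ Set.Icc (0:ℝ) 1, Q / (1 + r) ^ 2 ≤ D2 t := by
    intro t ht
    rw [hQdef, hD2def, Finset.sum_div]
    apply Finset.sum_le_sum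
    intro i _
    rw [div_pow]
    apply div_le_div_of_nonneg_left (sq_nonneg _) (pow_pos (hpos t ht i) 2)
    nlinarith [(hband t ht i).1, (hband t ht i).2, hpos t ht i]
  have hD2high : ∀ t ∈ Set.Icc (0:ℝ) 1, D2 t ≤ Q / (1 - r) ^ 2 := by
    intro t ht
    rw [hQdef, hD2def, Finset.sum_div]
    apply Finset.sum_le_sum
    intro i _
    rw [div_pow]
    apply div_le_div_of_nonneg_left (sq_nonneg _) (pow_pos (by linarith : (0:ℝ) < 1 - r) 2)
    nlinarith [(hband t ht i).1, (hband t ht i).2, hpos t ht i]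
  have hD2nonneg : ∀ t, 0 ≤ D2 t := by
    intro t; rw [hD2def]; positivity
  have hCS : ∀ t, (D1 t) ^ 2 ≤ (n : ℝ) * D2 t := by
    intro t
    rw [hD1def, hD2def]
    simpa using sq_sum_le_card_mul_sum_sq
      (s := Finset.univ) (f := fun i => (s i - 1) / (1 + t * (s i - 1)))
  set m : ℝ := ((1 + r) ^ (n + 2))⁻¹ * Q with hmdef
  set M : ℝ := ((n : ℝ) + 1) * ((1 - r) ^ (n + 2))⁻¹ * Q with hMdef
  clear_value m M
  have hg''low : ∀ t ∈ Set.Icc (0:ℝ) 1, m ≤ g'' t := by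
    intro t ht
    have h1 : Q / (1 + r) ^ 2 ≤ (D1 t) ^ 2 + D2 t := by
      nlinarith [hD2low t ht, sq_nonneg (D1 t)]
    have h2 : Q / (1 + r) ^ 2 * ((1 + r) ^ n)⁻¹ ≤ ((D1 t) ^ 2 + D2 t) * E t :=
      mul_le_mul h1 (hElow t ht) (by positivity) (by nlinarith [hD2nonneg t, sq_nonneg (D1 t)])
    have heq : m = Q / (1 + r) ^ 2 * ((1 + r) ^ n)⁻¹ := by
      rw [hmdef, pow_add, mul_inv, div_eq_mul_inv]
      ring
    rw [hg''def, heq]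
    exact h2
  have hg''high : ∀ t ∈ Set.Icc (0:ℝ) 1, g'' t ≤ M := by
    intro t ht
    have h1 : (D1 t) ^ 2 + D2 t ≤ ((n : ℝ) + 1) * (Q / (1 - r) ^ 2) := by
      nlinarith [hCS t, hD2high t ht, hD2nonneg t, Nat.cast_nonneg (α := ℝ) n]
    have h2 : ((D1 t) ^ 2 + D2 t) * E t ≤ ((n : ℝ) + 1) * (Q / (1 - r) ^ 2) * ((1 - r) ^ n)⁻¹ :=
      mul_le_mul h1 (hEhigh t ht) (hEpos t).le (by positivity)
    have heq : M = ((n : ℝ) + 1) * (Q / (1 - r) ^ 2) * ((1 - r) ^ n)⁻¹ := by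
      rw [hMdef, pow_add, mul_inv, div_eq_mul_inv]
      ring
    rw [hg''def, heq]
    exact h2
  -- step 1: m * t ≤ g' t ≤ M * t on [0,1]
  have hstep1 : ∀ t ∈ Set.Icc (0:ℝ) 1, m * t ≤ g' t := by
    intro t ht
    have hd : ∀ u ∈ Set.Icc (0:ℝ) 1, HasDerivAt (fun v => g' v - m * v) (g'' u - m) u := by
      intro u hu
      exact (hdg' u hu).sub (by simpa using (hasDerivAt_id u).const_mul m)
    have h0 : ∀ u ∈ Set.Ioo (0:ℝ) 1, 0 ≤ g'' u - m := fun u hu =>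
      sub_nonneg.mpr (hg''low u (Set.Ioo_subset_Icc_self hu))
    have := stmt10_aux_mono hd h0 (Set.left_mem_Icc.mpr zero_le_one) ht ht.1
    norm_num [hg'0] at this
    linarith
  have hstep1' : ∀ t ∈ Set.Icc (0:ℝ) 1, g' t ≤ M * t := by
    intro t ht
    have hd : ∀ u ∈ Set.Icc (0:ℝ) 1, HasDerivAt (fun v => M * v - g' v) (M - g'' u) u := by
      intro u hu
      exact HasDerivAt.sub (by simpa using (hasDerivAt_id u).const_mul M) (hdg' u hu)
    have h0 : ∀ u ∈ Set.Ioo (0:ℝ) 1, 0 ≤ M - g'' u := fun u hu =>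
      sub_nonneg.mpr (hg''high u (Set.Ioo_subset_Icc_self hu))
    have := stmt10_aux_mono hd h0 (Set.left_mem_Icc.mpr zero_le_one) ht ht.1
    norm_num [hg'0] at this
    linarith
  -- step 2: integrate once more
  have hparab : ∀ (c : ℝ) (u : ℝ), HasDerivAt (fun v : ℝ => c * (v ^ 2 / 2)) (c * u) u := by
    intro c u
    have := ((hasDerivAt_pow 2 u).div_const 2).const_mul c
    refine this.congr_deriv ?_
    norm_num
  have hlow : g 0 + m / 2 ≤ g 1 := by
    have hd : ∀ u ∈ Set.Icc (0:ℝ) 1,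
        HasDerivAt (fun v => g v - m * (v ^ 2 / 2)) (g' u - m * u) u :=
      fun u hu => (hdg u hu).sub (hparab m u)
    have h0 : ∀ u ∈ Set.Ioo (0:ℝ) 1, 0 ≤ g' u - m * u := fun u hu =>
      sub_nonneg.mpr (hstep1 u (Set.Ioo_subset_Icc_self hu))
    have := stmt10_aux_mono hd h0 (Set.left_mem_Icc.mpr zero_le_one)
      (Set.right_mem_Icc.mpr zero_le_one) zero_le_one
    norm_num at this
    linarith
  have hhigh : g 1 ≤ g 0 + M / 2 := by
    have hd : ∀ u ∈ Set.Icc (0:ℝ) 1,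
        HasDerivAt (fun v => M * (v ^ 2 / 2) - g v) (M * u - g' u) u :=
      fun u hu => (hparab M u).sub (hdg u hu)
    have h0 : ∀ u ∈ Set.Ioo (0:ℝ) 1, 0 ≤ M * u - g' u := fun u hu =>
      sub_nonneg.mpr (hstep1' u (Set.Ioo_subset_Icc_self hu))
    have := stmt10_aux_mono hd h0 (Set.left_mem_Icc.mpr zero_le_one)
      (Set.right_mem_Icc.mpr zero_le_one) zero_le_one
    norm_num at this
    linarith
  -- evaluations
  have hg0 : g 0 = (n : ℝ) + 1 := by
    simp [hgdef, hEdef]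
  have hg1 : g 1 = (∑ i, s i) + (∏ i, s i)⁻¹ := by
    rw [hgdef]
    simp only [hEdef, one_mul]
    congr 1
    · exact Finset.sum_congr rfl fun i _ => by ring
    · have h1 : ∀ i : Fin n, (1 : ℝ) + (s i - 1) = s i := fun i => by ring
      rw [show (∑ i, Real.log (1 + (s i - 1))) = ∑ i, Real.log (s i) from
        Finset.sum_congr rfl fun i _ => by rw [h1 i]]
      rw [Real.exp_neg, Real.exp_sum]
      congr 1
      exact Finset.prod_congr rfl fun i _ => Real.exp_log (hs i)
  -- convert rpow constants
  have hc1 : (1 + r) ^ (-((n : ℝ) + 2)) = ((1 + r) ^ (n + 2) : ℝ)⁻¹ := by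
    rw [← Real.rpow_natCast (1 + r) (n + 2), ← Real.rpow_neg (by linarith)]
    congr 1
    push_cast
    ring
  have hc2 : (1 - r) ^ (-((n : ℝ) + 2)) = ((1 - r) ^ (n + 2) : ℝ)⁻¹ := by
    rw [← Real.rpow_natCast (1 - r) (n + 2), ← Real.rpow_neg (by linarith)]
    congr 1
    push_cast
    ring
  constructor
  · rw [hc1]
    have : ((n : ℝ) + 1) + 1 / 2 * ((1 + r) ^ (n + 2) : ℝ)⁻¹ * Q = g 0 + m / 2 := by
      rw [hg0, hmdef]; ring
    rw [this, ← hg1]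
    exact hlow
  · rw [hc2]
    have : ((n : ℝ) + 1) + 1 / 2 * ((n : ℝ) + 1) * ((1 - r) ^ (n + 2) : ℝ)⁻¹ * Q
        = g 0 + M / 2 := by
      rw [hg0, hMdef]; ring
    rw [this, ← hg1]
    exact hhigh
end

section
/- Let n ≥ 1 be an integer, β = (β_1,…,β_n) ∈ ℝ^n, and x > 0. Then the integral ∫_{(0,∞)^n} exp(−x·(∑_{ℓ=1}^n s_ℓ + (∏_{ℓ=1}^n s_ℓ)^{−1}))·∏_{ℓ=1}^n s_ℓ^{β_ℓ} ds is finite. -/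
open MeasureTheory Set


/-- 1-D integrability: `exp(-c(t + t^(-p))) t^b` is integrable on `(0,∞)`. -/
lemma aux_oneDim {c p b : ℝ} (hc : 0 < c) (hp : 0 < p) :
    IntegrableOn (fun t : ℝ => Real.exp (-c * (t + t ^ (-p))) * t ^ b) (Set.Ioi 0) := by
  have hmeas : Measurable (fun t : ℝ => Real.exp (-c * (t + t ^ (-p))) * t ^ b) := by fun_prop
  rw [← Set.Ioc_union_Ioi_eq_Ioi (zero_le_one (α := ℝ))]
  apply IntegrableOn.union
  · -- on (0,1]: bounded
    obtain ⟨m, hm⟩ : ∃ m : ℕ, 0 ≤ b + m * p := by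
      refine ⟨⌈-b / p⌉₊, ?_⟩
      have h1 : -b / p ≤ (⌈-b / p⌉₊ : ℝ) := Nat.le_ceil _
      have := (div_le_iff₀ hp).mp h1
      linarith
    apply Integrable.mono' (g := fun _ : ℝ => (m.factorial : ℝ) / c ^ m)
    · exact integrableOn_const measure_Ioc_lt_top.ne
    · exact hmeas.aestronglyMeasurable.restrict
    · rw [ae_restrict_iff' measurableSet_Ioc]
      refine ae_of_all _ fun t ht => ?_
      obtain ⟨ht0, ht1⟩ := ht
      have htp : 0 < t ^ (-p) := Real.rpow_pos_of_pos ht0 _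
      have hnn : 0 ≤ Real.exp (-c * (t + t ^ (-p))) * t ^ b :=
        mul_nonneg (Real.exp_nonneg _) (Real.rpow_nonneg ht0.le _)
      rw [Real.norm_eq_abs, abs_of_nonneg hnn]
      -- exp bound: exp(-(c t^{-p})) ≤ m!/(c t^{-p})^m
      have hy : (0:ℝ) ≤ c * t ^ (-p) := le_of_lt (mul_pos hc htp)
      have h1 : (c * t ^ (-p)) ^ m / m.factorial ≤ Real.exp (c * t ^ (-p)) :=
        Real.pow_div_factorial_le_exp _ hy m
      have hypos : 0 < (c * t ^ (-p)) ^ m := pow_pos (mul_pos hc htp) m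
      have h2 : Real.exp (-(c * t ^ (-p))) ≤ (m.factorial : ℝ) / (c * t ^ (-p)) ^ m := by
        rw [Real.exp_neg, inv_eq_one_div, div_le_div_iff₀ (Real.exp_pos _) hypos]
        have h1' := (div_le_iff₀ (show (0:ℝ) < m.factorial by positivity)).mp h1
        nlinarith
      have h3 : Real.exp (-c * (t + t ^ (-p))) ≤ Real.exp (-(c * t ^ (-p))) := by
        apply Real.exp_le_exp.mpr; nlinarith
      -- (c t^{-p})^m = c^m * t^{-(p*m)}
      have h4 : (c * t ^ (-p)) ^ m = c ^ m * t ^ (-(p * m)) := by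
        rw [mul_pow, ← Real.rpow_natCast (t ^ (-p)) m, ← Real.rpow_mul ht0.le]
        ring_nf
      calc Real.exp (-c * (t + t ^ (-p))) * t ^ b
          ≤ ((m.factorial : ℝ) / (c * t ^ (-p)) ^ m) * t ^ b := by
            exact mul_le_mul_of_nonneg_right (h3.trans h2) (Real.rpow_nonneg ht0.le _)
        _ = ((m.factorial : ℝ) / c ^ m) * (t ^ (p * m) * t ^ b) := by
            rw [h4, Real.rpow_neg ht0.le]
            field_simp
        _ = ((m.factorial : ℝ) / c ^ m) * t ^ (p * m + b) := by
            rw [← Real.rpow_add ht0]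
        _ ≤ ((m.factorial : ℝ) / c ^ m) * 1 := by
            apply mul_le_mul_of_nonneg_left _ (by positivity)
            exact Real.rpow_le_one ht0.le ht1 (by push_cast; linarith)
        _ = (m.factorial : ℝ) / c ^ m := mul_one _
  · -- on (1,∞): dominated by t^(max b 0) * exp(-c t)
    have hInt : IntegrableOn (fun t : ℝ => t ^ (max b 0) * Real.exp (-c * t)) (Set.Ioi 1) := by
      have := integrableOn_rpow_mul_exp_neg_mul_rpow
        (lt_of_lt_of_le neg_one_lt_zero (le_max_right b 0)) (zero_lt_one (α := ℝ)) hc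
      simp only [Real.rpow_one] at this
      exact this.mono_set (Set.Ioi_subset_Ioi zero_le_one)
    apply Integrable.mono' hInt hmeas.aestronglyMeasurable.restrict
    rw [ae_restrict_iff' measurableSet_Ioi]
    refine ae_of_all _ fun t ht => ?_
    have ht1 : (1:ℝ) < t := ht
    have ht0 : (0:ℝ) < t := lt_trans zero_lt_one ht1
    have hnn : 0 ≤ Real.exp (-c * (t + t ^ (-p))) * t ^ b :=
      mul_nonneg (Real.exp_nonneg _) (Real.rpow_nonneg ht0.le _)
    rw [Real.norm_eq_abs, abs_of_nonneg hnn]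
    have h1 : Real.exp (-c * (t + t ^ (-p))) ≤ Real.exp (-c * t) := by
      apply Real.exp_le_exp.mpr
      have : 0 ≤ t ^ (-p) := Real.rpow_nonneg ht0.le _
      nlinarith
    have h2 : t ^ b ≤ t ^ (max b 0) :=
      Real.rpow_le_rpow_of_exponent_le ht1.le (le_max_left b 0)
    calc Real.exp (-c * (t + t ^ (-p))) * t ^ b
        ≤ Real.exp (-c * t) * t ^ (max b 0) := by
          apply mul_le_mul h1 h2 (Real.rpow_nonneg ht0.le _) (Real.exp_nonneg _)
      _ = t ^ (max b 0) * Real.exp (-c * t) := mul_comm _ _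

/-- AM-GM consequence: each `s ℓ + (s ℓ)^(-1/n)` is dominated by `∑ s + (∏ s)⁻¹`. -/
lemma aux_amgm {n : ℕ} (hn : 1 ≤ n) (s : Fin n → ℝ) (hs : ∀ i, 0 < s i) (ℓ : Fin n) :
    s ℓ + (s ℓ) ^ (-(1 / n : ℝ)) ≤ (∑ j, s j) + (∏ j, s j)⁻¹ := by
  have hn0 : (0:ℝ) < n := by exact_mod_cast hn
  have hP : 0 < ∏ j, s j := Finset.prod_pos fun j _ => hs j
  set P := ∏ j, s j with hPdef
  set z : Fin n → ℝ := fun j => if j = ℓ then P⁻¹ else s j with hzdef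
  have hz : ∀ j, 0 < z j := by
    intro j; by_cases h : j = ℓ <;> simp [hzdef, h, inv_pos.mpr hP, hs j]
  have hw : ∑ _j : Fin n, (1 / n : ℝ) = 1 := by
    rw [Finset.sum_const, Finset.card_univ, Fintype.card_fin, nsmul_eq_mul]
    field_simp
  have hamgm := Real.geom_mean_le_arith_mean_weighted Finset.univ (fun _ => (1 / n : ℝ)) z
    (fun i _ => by positivity) hw (fun j _ => (hz j).le)
  -- compute the product of z
  have h5 : s ℓ * ∏ j ∈ Finset.univ.erase ℓ, s j = P :=
    Finset.mul_prod_erase Finset.univ s (Finset.mem_univ ℓ)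
  have h6 : ∏ j, z j = (s ℓ)⁻¹ := by
    rw [← Finset.mul_prod_erase Finset.univ z (Finset.mem_univ ℓ)]
    have he : ∏ j ∈ Finset.univ.erase ℓ, z j = ∏ j ∈ Finset.univ.erase ℓ, s j :=
      Finset.prod_congr rfl fun j hj => by
        simp [hzdef, (Finset.mem_erase.mp hj).1]
    rw [he]
    have : z ℓ = P⁻¹ := by simp [hzdef]
    rw [this]
    field_simp
    rw [eq_div_iff (hs ℓ).ne']
    linarith [h5]
  -- compute the sum of z
  have h7 : ∑ j, z j = P⁻¹ + ((∑ j, s j) - s ℓ) := by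
    rw [← Finset.add_sum_erase Finset.univ z (Finset.mem_univ ℓ)]
    have he : ∑ j ∈ Finset.univ.erase ℓ, z j = ∑ j ∈ Finset.univ.erase ℓ, s j :=
      Finset.sum_congr rfl fun j hj => by
        simp [hzdef, (Finset.mem_erase.mp hj).1]
    have h8 : s ℓ + ∑ j ∈ Finset.univ.erase ℓ, s j = ∑ j, s j :=
      Finset.add_sum_erase Finset.univ s (Finset.mem_univ ℓ)
    have : z ℓ = P⁻¹ := by simp [hzdef]
    rw [he, this]
    linarith
  have hprod : ∏ j, z j ^ (1 / n : ℝ) = ((s ℓ)⁻¹) ^ (1 / n : ℝ) := by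
    rw [Real.finset_prod_rpow Finset.univ z (fun j _ => (hz j).le), h6]
  have hsum : ∑ j : Fin n, (1 / n : ℝ) * z j = (1 / n : ℝ) * (P⁻¹ + ((∑ j, s j) - s ℓ)) := by
    rw [← Finset.mul_sum, h7]
  rw [hprod, hsum] at hamgm
  -- identify the rpow
  have hid : (s ℓ) ^ (-(1 / n : ℝ)) = ((s ℓ)⁻¹) ^ (1 / n : ℝ) := by
    rw [Real.rpow_neg (hs ℓ).le, Real.inv_rpow (hs ℓ).le]
  have hB : 0 ≤ P⁻¹ + ((∑ j, s j) - s ℓ) := by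
    have h9 : s ℓ ≤ ∑ j, s j :=
      Finset.single_le_sum (fun j _ => (hs j).le) (Finset.mem_univ ℓ)
    have := inv_pos.mpr hP
    linarith
  have h10 : (1 / n : ℝ) * (P⁻¹ + ((∑ j, s j) - s ℓ)) ≤ P⁻¹ + ((∑ j, s j) - s ℓ) := by
    have h11 : (1 / n : ℝ) ≤ 1 := by
      rw [div_le_one hn0]; exact_mod_cast hn
    nlinarith
  rw [hid]
  linarith

/-- Integrability claim `H(x) < ∞` from the proof of Theorem 2.6: for any real
exponents `β₁, …, βₙ` and any `x > 0`, the function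
`s ↦ exp(-x (∑ sₗ + (∏ sₗ)⁻¹)) ∏ sₗ^(βₗ)` is integrable on `(0,∞)ⁿ`. -/
theorem stmt12 (n : ℕ) (hn : 1 ≤ n) (β : Fin n → ℝ) (x : ℝ) (hx : 0 < x) :
    IntegrableOn
      (fun s : Fin n → ℝ =>
        Real.exp (-x * ((∑ ℓ, s ℓ) + (∏ ℓ, s ℓ)⁻¹)) * ∏ ℓ, s ℓ ^ (β ℓ))
      {s : Fin n → ℝ | ∀ i, 0 < s i} := by
  have hn0 : (0:ℝ) < n := by exact_mod_cast hn
  set c : ℝ := x / n with hcdef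
  have hc : 0 < c := div_pos hx hn0
  set g : Fin n → ℝ → ℝ := fun ℓ =>
    (Set.Ioi (0:ℝ)).indicator
      (fun t => Real.exp (-c * (t + t ^ (-(1 / n : ℝ)))) * t ^ β ℓ) with hgdef
  have hgint : ∀ ℓ, Integrable (g ℓ) := fun ℓ =>
    (aux_oneDim hc (by positivity)).integrable_indicator measurableSet_Ioi
  have hG : Integrable (fun s : Fin n → ℝ => ∏ ℓ, g ℓ (s ℓ)) :=
    Integrable.fintype_prod (𝕜 := ℝ) hgint
  have hset : MeasurableSet {s : Fin n → ℝ | ∀ i, 0 < s i} := by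
    have : {s : Fin n → ℝ | ∀ i, 0 < s i} = Set.pi Set.univ (fun _ => Set.Ioi 0) := by
      ext t; simp [Set.mem_pi]
    rw [this]
    exact MeasurableSet.univ_pi fun i => measurableSet_Ioi
  have hf : Measurable (fun s : Fin n → ℝ =>
      Real.exp (-x * ((∑ ℓ, s ℓ) + (∏ ℓ, s ℓ)⁻¹)) * ∏ ℓ, s ℓ ^ (β ℓ)) := by
    apply Measurable.mul
    · apply Real.measurable_exp.comp
      apply Measurable.const_mul
      exact (Finset.measurable_sum _ fun i _ => measurable_pi_apply i).add
        (Finset.measurable_prod _ fun i _ => measurable_pi_apply i).inv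
    · exact Finset.measurable_prod _ fun i _ => by fun_prop
  apply Integrable.mono' hG.integrableOn hf.aestronglyMeasurable.restrict
  rw [ae_restrict_iff' hset]
  refine ae_of_all _ fun s hs => ?_
  have hs' : ∀ i, 0 < s i := hs
  have hP : 0 < ∏ ℓ, s ℓ := Finset.prod_pos fun j _ => hs' j
  have hprodβ : 0 ≤ ∏ ℓ, s ℓ ^ (β ℓ) :=
    Finset.prod_nonneg fun j _ => Real.rpow_nonneg (hs' j).le _
  have hnn : 0 ≤ Real.exp (-x * ((∑ ℓ, s ℓ) + (∏ ℓ, s ℓ)⁻¹)) * ∏ ℓ, s ℓ ^ (β ℓ) :=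
    mul_nonneg (Real.exp_nonneg _) hprodβ
  rw [Real.norm_eq_abs, abs_of_nonneg hnn]
  -- rewrite the product bound
  have hGval : ∏ ℓ, g ℓ (s ℓ) =
      Real.exp (∑ ℓ, -c * (s ℓ + (s ℓ) ^ (-(1 / n : ℝ)))) * ∏ ℓ, s ℓ ^ (β ℓ) := by
    have : ∀ ℓ, g ℓ (s ℓ) =
        Real.exp (-c * (s ℓ + (s ℓ) ^ (-(1 / n : ℝ)))) * (s ℓ) ^ β ℓ := fun ℓ =>
      Set.indicator_of_mem (hs' ℓ) _
    simp_rw [this]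
    rw [Finset.prod_mul_distrib, Real.exp_sum]
  rw [hGval]
  apply mul_le_mul_of_nonneg_right _ hprodβ
  apply Real.exp_le_exp.mpr
  -- key inequality: x * A ≥ c * Σ
  have hkey : ∑ ℓ, (s ℓ + (s ℓ) ^ (-(1 / n : ℝ))) ≤
      n * ((∑ ℓ, s ℓ) + (∏ ℓ, s ℓ)⁻¹) := by
    calc ∑ ℓ, (s ℓ + (s ℓ) ^ (-(1 / n : ℝ)))
        ≤ ∑ _ℓ : Fin n, ((∑ j, s j) + (∏ j, s j)⁻¹) :=
          Finset.sum_le_sum fun ℓ _ => aux_amgm hn s hs' ℓ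
      _ = n * ((∑ ℓ, s ℓ) + (∏ ℓ, s ℓ)⁻¹) := by
          rw [Finset.sum_const, Finset.card_univ, Fintype.card_fin, nsmul_eq_mul]
  have hA : 0 ≤ (∑ ℓ, s ℓ) + (∏ ℓ, s ℓ)⁻¹ := by
    have : 0 ≤ ∑ ℓ, s ℓ := Finset.sum_nonneg fun j _ => (hs' j).le
    have := inv_pos.mpr hP
    linarith
  have : ∑ ℓ, -c * (s ℓ + (s ℓ) ^ (-(1 / n : ℝ))) =
      -c * ∑ ℓ, (s ℓ + (s ℓ) ^ (-(1 / n : ℝ))) := by rw [← Finset.mul_sum]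
  rw [this]
  have hc' : c * (n * ((∑ ℓ, s ℓ) + (∏ ℓ, s ℓ)⁻¹)) = x * ((∑ ℓ, s ℓ) + (∏ ℓ, s ℓ)⁻¹) := by
    rw [hcdef]; field_simp
  nlinarith [mul_le_mul_of_nonneg_left hkey hc.le]
end

section
/- Let n ≥ 1 be an integer and β = (β_1,…,β_n) ∈ ℝ^n. Define H(x) = ∫_{(0,∞)^n} exp(−x·A(s))·∏_{ℓ=1}^n s_ℓ^{β_ℓ} ds, where A(s) = ∑_{ℓ=1}^n s_ℓ + (∏_{ℓ=1}^n s_ℓ)^{−1}. Then there exist constants b₁, b₂ > 0 and x₁ > 0 such that for all x ≥ x₁, b₁·x^{−n/2}·e^{−(n+1)x} ≤ H(x) ≤ b₂·x^{−n/2}·e^{−(n+1)x}. -/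
open MeasureTheory Set

namespace Stmt13Aux


noncomputable def phi (t : ℝ) : ℝ := t - 1 - Real.log t

lemma phi_nonneg {t : ℝ} (ht : 0 < t) : 0 ≤ phi t := by
  have := Real.log_le_sub_one_of_pos ht
  simp only [phi]; linarith

lemma phi_ge_mid {t : ℝ} (ht : 0 < t) (ht2 : t ≤ 2) : (t - 1) ^ 2 / 6 ≤ phi t := by
  have hs : Real.sqrt t ^ 2 = t := Real.sq_sqrt ht.le
  have hlog : Real.log (Real.sqrt t) ≤ Real.sqrt t - 1 :=
    Real.log_le_sub_one_of_pos (Real.sqrt_pos.2 ht)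
  have hhalf : Real.log (Real.sqrt t) = Real.log t / 2 := Real.log_sqrt ht.le
  have h1 : (Real.sqrt t - 1) ^ 2 ≤ phi t := by
    simp only [phi]; nlinarith
  have hsle : Real.sqrt t ≤ Real.sqrt 2 := Real.sqrt_le_sqrt ht2
  have h2 : Real.sqrt 2 ^ 2 = 2 := Real.sq_sqrt (by norm_num)
  have h6 : (Real.sqrt t + 1) ^ 2 ≤ 6 := by
    nlinarith [Real.sqrt_nonneg t, Real.sqrt_nonneg 2]
  nlinarith [sq_nonneg (Real.sqrt t - 1), Real.sqrt_nonneg t]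

lemma phi_ge_tail {t : ℝ} (ht : 2 ≤ t) : t / 2 - Real.log 2 ≤ phi t := by
  have h0 : (0:ℝ) < t := by linarith
  have := Real.log_le_sub_one_of_pos (show (0:ℝ) < t / 2 by linarith)
  have hdiv : Real.log (t / 2) = Real.log t - Real.log 2 :=
    Real.log_div (by positivity) (by norm_num)
  simp only [phi]; linarith

lemma phi_le {t : ℝ} (ht : 0 < t) : phi t ≤ (t - 1) ^ 2 / t := by
  have h := Real.log_le_sub_one_of_pos (show (0:ℝ) < t⁻¹ by positivity)
  have hinv : Real.log t⁻¹ = -Real.log t := Real.log_inv t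
  have h2 : 1 - t⁻¹ ≤ Real.log t := by linarith
  simp only [phi]
  have hmul : t⁻¹ * t = 1 := inv_mul_cancel₀ ht.ne'
  rw [div_eq_mul_inv, ← sub_nonneg]
  nlinarith [mul_pos ht ht]

lemma exp_decay {c x : ℝ} (hc : 0 < c) (hx : 1 ≤ x) :
    Real.exp (-(c * x)) ≤ c⁻¹ * x ^ (-(1:ℝ) / 2) := by
  have hx0 : (0:ℝ) < x := lt_of_lt_of_le one_pos hx
  have h1 : c * x ≤ Real.exp (c * x) := le_trans (by linarith) (Real.add_one_le_exp _)
  have hcx : 0 < c * x := by positivity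
  have h2 : Real.exp (-(c * x)) ≤ (c * x)⁻¹ := by
    rw [Real.exp_neg]
    exact inv_anti₀ hcx h1
  refine h2.trans ?_
  rw [mul_inv]
  refine mul_le_mul_of_nonneg_left ?_ (by positivity)
  have : x⁻¹ = x ^ (-1 : ℝ) := by rw [Real.rpow_neg_one]
  rw [this]
  exact Real.rpow_le_rpow_of_exponent_le hx (by norm_num)



noncomputable def f1 (b x t : ℝ) : ℝ := Real.exp (-(x * phi t) + b * Real.log t)

lemma f1_nonneg (b x t : ℝ) : 0 ≤ f1 b x t := (Real.exp_pos _).le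

lemma f1_meas (b x : ℝ) : Measurable (f1 b x) := by
  unfold f1 phi
  exact (((measurable_id.sub measurable_const).sub Real.measurable_log).const_mul x).neg.add
    (Real.measurable_log.const_mul b) |>.exp

lemma f1_eq {t : ℝ} (b x : ℝ) (ht : 0 < t) :
    f1 b x t = Real.exp (-(x * phi t)) * t ^ b := by
  rw [f1, Real.exp_add, Real.rpow_def_of_pos ht, mul_comm (Real.log t) b]

lemma b_log_le (b : ℝ) {t : ℝ} (ht : 1 ≤ t) :
    b * Real.log t ≤ t / 8 + |b| * Real.log (8 * (|b| + 1)) := by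
  set a : ℝ := 8 * (|b| + 1) with ha
  have hb0 : 0 ≤ |b| := abs_nonneg b
  have ha8 : (8:ℝ) ≤ a := by simp only [ha]; nlinarith
  have ha0 : (0:ℝ) < a := by linarith
  have ht0 : (0:ℝ) < t := by linarith
  have hla : (0:ℝ) ≤ Real.log a := Real.log_nonneg (by linarith)
  have hlt : 0 ≤ Real.log t := Real.log_nonneg ht
  have h1 : Real.log (t / a) ≤ t / a - 1 := Real.log_le_sub_one_of_pos (by positivity)
  have h2 : Real.log (t / a) = Real.log t - Real.log a := Real.log_div ht0.ne' ha0.ne'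
  have h3 : Real.log t ≤ t / a + Real.log a := by linarith
  have h4 : b * Real.log t ≤ |b| * Real.log t :=
    mul_le_mul_of_nonneg_right (le_abs_self b) hlt
  have h5 : |b| * Real.log t ≤ |b| * (t / a + Real.log a) :=
    mul_le_mul_of_nonneg_left h3 hb0
  have h6 : |b| * (t / a) ≤ t / 8 := by
    rw [show |b| * (t / a) = |b| * t / a by ring, div_le_div_iff₀ ha0 (by norm_num : (0:ℝ) < 8)]
    nlinarith
  calc b * Real.log t ≤ |b| * (t / a + Real.log a) := h4.trans h5
    _ = |b| * (t / a) + |b| * Real.log a := by ring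
    _ ≤ t / 8 + |b| * Real.log a := by linarith





lemma reg1_bound {b x t : ℝ} (hx : 0 ≤ x) (hbx : 0 ≤ x / 2 + b) (ht : t ∈ Ioc (0:ℝ) (1/2)) :
    f1 b x t ≤ Real.exp (x * (1/2 - Real.log 2) - b * Real.log 2) := by
  obtain ⟨ht0, ht2⟩ := ht
  rw [f1, Real.exp_le_exp]
  have h2t : Real.log 2 + Real.log t ≤ 2 * t - 1 := by
    have := Real.log_le_sub_one_of_pos (show (0:ℝ) < 2 * t by linarith)
    rwa [Real.log_mul (by norm_num) ht0.ne'] at this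
  have hneg : Real.log t ≤ -Real.log 2 := by
    have : Real.log t ≤ Real.log (1/2) := Real.log_le_log ht0 ht2
    rwa [show (1:ℝ)/2 = 2⁻¹ by norm_num, Real.log_inv] at this
  have m1 : (x/2) * (Real.log 2 + Real.log t) ≤ (x/2) * (2*t - 1) :=
    mul_le_mul_of_nonneg_left h2t (by linarith)
  have m2 : (x/2 + b) * Real.log t ≤ (x/2 + b) * (-Real.log 2) :=
    mul_le_mul_of_nonneg_left hneg hbx
  simp only [phi]
  nlinarith [m1, m2]

lemma reg2_bound {b x t : ℝ} (hx : 0 ≤ x) (ht : t ∈ Ioc (1/2:ℝ) 2) :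
    f1 b x t ≤ Real.exp (|b| * Real.log 2) * Real.exp (-(x/6) * (t-1)^2) := by
  obtain ⟨ht0, ht2⟩ := ht
  have htpos : (0:ℝ) < t := by linarith
  rw [f1, ← Real.exp_add, Real.exp_le_exp]
  have hub : Real.log t ≤ Real.log 2 := Real.log_le_log htpos ht2
  have hlb : -Real.log 2 ≤ Real.log t := by
    have : Real.log (1/2) ≤ Real.log t := Real.log_le_log (by norm_num) ht0.le
    rwa [show (1:ℝ)/2 = 2⁻¹ by norm_num, Real.log_inv] at this
  have habs : b * Real.log t ≤ |b| * Real.log 2 := by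
    rcases le_or_gt 0 b with h | h
    · calc b * Real.log t ≤ b * Real.log 2 := mul_le_mul_of_nonneg_left hub h
        _ ≤ |b| * Real.log 2 := mul_le_mul_of_nonneg_right (le_abs_self b)
            (Real.log_nonneg one_le_two)
    · calc b * Real.log t ≤ b * (-Real.log 2) := by nlinarith
        _ ≤ |b| * Real.log 2 := by rw [abs_of_neg h]; ring_nf; exact le_rfl
  have hphi : x * ((t-1)^2/6) ≤ x * phi t :=
    mul_le_mul_of_nonneg_left (phi_ge_mid htpos ht2) hx
  nlinarith [hphi, habs]

lemma reg3_bound {b x t : ℝ} (hx : 3 ≤ x) (ht : t ∈ Ioi (2:ℝ)) :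
    f1 b x t ≤ Real.exp (|b| * Real.log (8*(|b|+1)) + 2 + x * (Real.log 2 - 3/4))
      * Real.exp (-t) := by
  have ht2 : (2:ℝ) ≤ t := le_of_lt ht
  rw [f1, ← Real.exp_add, Real.exp_le_exp]
  have h1 : x * (t/2 - Real.log 2) ≤ x * phi t :=
    mul_le_mul_of_nonneg_left (phi_ge_tail ht2) (by linarith)
  have h2 := b_log_le b (show (1:ℝ) ≤ t by linarith)
  nlinarith [mul_nonneg (show (0:ℝ) ≤ x - 8/3 by linarith) (show (0:ℝ) ≤ t - 2 by linarith)]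



lemma rpow_neg_half {x : ℝ} (hx : 0 ≤ x) : x ^ (-(1:ℝ)/2) = (Real.sqrt x)⁻¹ := by
  rw [neg_div, Real.rpow_neg hx, Real.sqrt_eq_rpow]

lemma oneDim (b : ℝ) : ∃ C > 0, ∀ x : ℝ, 2 * |b| + 66 ≤ x →
    IntegrableOn (f1 b x) (Ioi 0) ∧
      ∫ t in Ioi 0, f1 b x t ≤ C * x ^ (-(1:ℝ)/2) := by
  have hlog2 : (0.6931471803 : ℝ) < Real.log 2 := Real.log_two_gt_d9
  have hlog2' : Real.log 2 < 0.6931471808 := Real.log_two_lt_d9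
  set c1 : ℝ := Real.log 2 - 1/2 with hc1
  set c3 : ℝ := 3/4 - Real.log 2 with hc3
  have hc1pos : 0 < c1 := by rw [hc1]; linarith
  have hc3pos : 0 < c3 := by rw [hc3]; linarith
  set D : ℝ := |b| * Real.log (8*(|b|+1)) with hD
  set C1 : ℝ := Real.exp (-(b * Real.log 2)) / 2 * c1⁻¹ with hC1
  set C2 : ℝ := Real.exp (|b| * Real.log 2) * Real.sqrt (6 * Real.pi) with hC2
  set C3 : ℝ := Real.exp D * c3⁻¹ with hC3
  have hC1p : 0 < C1 := by positivity
  have hC2p : 0 < C2 := by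
    have : 0 < Real.sqrt (6 * Real.pi) := Real.sqrt_pos.2 (by positivity)
    positivity
  have hC3p : 0 < C3 := by positivity
  refine ⟨C1 + C2 + C3, by positivity, fun x hx => ?_⟩
  have hb0 : (0:ℝ) ≤ |b| := abs_nonneg b
  have hx66 : (66:ℝ) ≤ x := by linarith
  have hx0 : (0:ℝ) < x := by linarith
  have hx1 : (1:ℝ) ≤ x := by linarith
  have hbx : 0 ≤ x / 2 + b := by
    have := neg_abs_le b; linarith
  -- region 1
  have hS1m : MeasurableSet (Ioc (0:ℝ) (1/2)) := measurableSet_Ioc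
  have hS2m : MeasurableSet (Ioc (1/2:ℝ) 2) := measurableSet_Ioc
  have hS3m : MeasurableSet (Ioi (2:ℝ)) := measurableSet_Ioi
  have hone : ∀ t : ℝ, ‖f1 b x t‖ = f1 b x t := fun t => by
    rw [Real.norm_eq_abs, abs_of_nonneg (f1_nonneg b x t)]
  -- integrability on region 1
  have constInt : IntegrableOn (fun _ : ℝ => Real.exp (x * (1/2 - Real.log 2) - b * Real.log 2))
      (Ioc (0:ℝ) (1/2)) := integrableOn_const measure_Ioc_lt_top.ne
  have int1 : IntegrableOn (f1 b x) (Ioc (0:ℝ) (1/2)) := by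
    refine Integrable.mono' constInt
      ((f1_meas b x).aestronglyMeasurable.restrict) ?_
    refine (ae_restrict_iff' hS1m).2 (ae_of_all _ fun t ht => ?_)
    rw [hone]; exact reg1_bound hx0.le hbx ht
  -- integrability on region 2
  have intg2 : Integrable (fun t : ℝ => Real.exp (|b| * Real.log 2)
      * Real.exp (-(x/6) * (t-1)^2)) := by
    have h := (integrable_exp_neg_mul_sq (show (0:ℝ) < x/6 by linarith)).comp_sub_right 1
    exact h.const_mul _
  have int2 : IntegrableOn (f1 b x) (Ioc (1/2:ℝ) 2) := by
    refine Integrable.mono' intg2.integrableOn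
      ((f1_meas b x).aestronglyMeasurable.restrict) ?_
    refine (ae_restrict_iff' hS2m).2 (ae_of_all _ fun t ht => ?_)
    rw [hone]; exact reg2_bound hx0.le ht
  -- integrability on region 3
  have intg3 : IntegrableOn (fun t : ℝ => Real.exp (D + 2 + x * (Real.log 2 - 3/4))
      * Real.exp (-t)) (Ioi (2:ℝ)) := by
    have h := exp_neg_integrableOn_Ioi (2:ℝ) (show (0:ℝ) < 1 by norm_num)
    simp only [neg_mul, one_mul] at h
    exact h.const_mul _
  have int3 : IntegrableOn (f1 b x) (Ioi (2:ℝ)) := by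
    refine Integrable.mono' intg3
      ((f1_meas b x).aestronglyMeasurable.restrict) ?_
    refine (ae_restrict_iff' hS3m).2 (ae_of_all _ fun t ht => ?_)
    rw [hone]
    exact reg3_bound (by linarith) ht
  have hu1 : Ioc (0:ℝ) (1/2) ∪ Ioc (1/2) 2 = Ioc 0 2 :=
    Ioc_union_Ioc_eq_Ioc (by norm_num) (by norm_num)
  have hu2 : Ioc (0:ℝ) 2 ∪ Ioi 2 = Ioi 0 := Ioc_union_Ioi_eq_Ioi (by norm_num)
  have int12 : IntegrableOn (f1 b x) (Ioc (0:ℝ) 2) := by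
    rw [← hu1]; exact int1.union int2
  have intall : IntegrableOn (f1 b x) (Ioi (0:ℝ)) := by
    rw [← hu2]; exact int12.union int3
  refine ⟨intall, ?_⟩
  -- estimate region 1 integral
  have est1 : ∫ t in Ioc (0:ℝ) (1/2), f1 b x t ≤ C1 * x ^ (-(1:ℝ)/2) := by
    have step : ∫ t in Ioc (0:ℝ) (1/2), f1 b x t
        ≤ ∫ _ in Ioc (0:ℝ) (1/2), Real.exp (x * (1/2 - Real.log 2) - b * Real.log 2) := by
      exact setIntegral_mono_on int1 constInt hS1m fun t ht => reg1_bound hx0.le hbx ht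
    rw [setIntegral_const] at step
    have hvol : (volume (Ioc (0:ℝ) (1/2))).toReal = 1/2 := by
      rw [Real.volume_Ioc]; norm_num
    rw [measureReal_def, hvol] at step
    refine step.trans ?_
    have : Real.exp (x * (1/2 - Real.log 2) - b * Real.log 2)
        = Real.exp (-(c1 * x)) * Real.exp (-(b * Real.log 2)) := by
      rw [← Real.exp_add]; congr 1; rw [hc1]; ring
    rw [this, smul_eq_mul]
    have hd := exp_decay hc1pos hx1
    calc (1:ℝ)/2 * (Real.exp (-(c1*x)) * Real.exp (-(b * Real.log 2)))
        ≤ 1/2 * (c1⁻¹ * x ^ (-(1:ℝ)/2) * Real.exp (-(b * Real.log 2))) := by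
          have := Real.exp_pos (-(b * Real.log 2))
          nlinarith [Real.exp_pos (-(c1*x)), Real.rpow_nonneg hx0.le (-(1:ℝ)/2)]
      _ = C1 * x ^ (-(1:ℝ)/2) := by rw [hC1]; ring
  -- estimate region 2 integral
  have est2 : ∫ t in Ioc (1/2:ℝ) 2, f1 b x t ≤ C2 * x ^ (-(1:ℝ)/2) := by
    have step : ∫ t in Ioc (1/2:ℝ) 2, f1 b x t
        ≤ ∫ t in Ioc (1/2:ℝ) 2, Real.exp (|b| * Real.log 2) * Real.exp (-(x/6) * (t-1)^2) := by
      refine setIntegral_mono_on int2 intg2.integrableOn hS2m fun t ht => reg2_bound hx0.le ht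
    refine step.trans ?_
    have step2 : ∫ t in Ioc (1/2:ℝ) 2, Real.exp (|b| * Real.log 2) * Real.exp (-(x/6) * (t-1)^2)
        ≤ ∫ t : ℝ, Real.exp (|b| * Real.log 2) * Real.exp (-(x/6) * (t-1)^2) := by
      refine setIntegral_le_integral intg2 (ae_of_all _ fun t => by positivity)
    refine step2.trans ?_
    rw [integral_const_mul]
    have hgauss : ∫ t : ℝ, Real.exp (-(x/6) * (t-1)^2)
        = Real.sqrt (Real.pi / (x/6)) := by
      rw [show (fun t : ℝ => Real.exp (-(x/6) * (t-1)^2))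
          = (fun u : ℝ => Real.exp (-(x/6) * u^2)) ∘ (fun t : ℝ => t - 1) by rfl]
      rw [show ∫ t : ℝ, ((fun u : ℝ => Real.exp (-(x/6) * u^2)) ∘ (fun t : ℝ => t - 1)) t
          = ∫ u : ℝ, Real.exp (-(x/6) * u^2) from
        integral_sub_right_eq_self (fun u : ℝ => Real.exp (-(x/6) * u^2)) 1]
      exact integral_gaussian (x/6)
    rw [hgauss]
    have : Real.sqrt (Real.pi / (x/6)) = Real.sqrt (6 * Real.pi) * x ^ (-(1:ℝ)/2) := by
      rw [rpow_neg_half hx0.le, show Real.pi / (x/6) = 6 * Real.pi / x by field_simp,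
        Real.sqrt_div (by positivity) x, div_eq_mul_inv]
    rw [this, hC2]; ring_nf; exact le_rfl
  -- estimate region 3 integral
  have est3 : ∫ t in Ioi (2:ℝ), f1 b x t ≤ C3 * x ^ (-(1:ℝ)/2) := by
    have step : ∫ t in Ioi (2:ℝ), f1 b x t
        ≤ ∫ t in Ioi (2:ℝ), Real.exp (D + 2 + x * (Real.log 2 - 3/4)) * Real.exp (-t) := by
      refine setIntegral_mono_on int3 intg3 hS3m fun t ht => ?_
      have := reg3_bound (b := b) (show (3:ℝ) ≤ x by linarith) ht
      rw [show |b| * Real.log (8*(|b|+1)) + 2 + x * (Real.log 2 - 3/4)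
          = D + 2 + x * (Real.log 2 - 3/4) by rw [hD]] at this
      exact this
    refine step.trans ?_
    rw [integral_const_mul, integral_exp_neg_Ioi]
    have key : Real.exp (D + 2 + x * (Real.log 2 - 3/4)) * Real.exp (-2)
        = Real.exp D * Real.exp (-(c3 * x)) := by
      rw [← Real.exp_add, ← Real.exp_add]; congr 1; rw [hc3]; ring
    rw [key]
    have hd := exp_decay hc3pos hx1
    calc Real.exp D * Real.exp (-(c3 * x)) ≤ Real.exp D * (c3⁻¹ * x ^ (-(1:ℝ)/2)) :=
          mul_le_mul_of_nonneg_left hd (Real.exp_pos _).le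
      _ = C3 * x ^ (-(1:ℝ)/2) := by rw [hC3]; ring
  -- combine
  have split2 : ∫ t in Ioi (0:ℝ), f1 b x t
      = (∫ t in Ioc (0:ℝ) 2, f1 b x t) + ∫ t in Ioi (2:ℝ), f1 b x t := by
    rw [← hu2, setIntegral_union (Ioc_disjoint_Ioi le_rfl) hS3m int12 int3]
  have split1 : ∫ t in Ioc (0:ℝ) 2, f1 b x t
      = (∫ t in Ioc (0:ℝ) (1/2), f1 b x t) + ∫ t in Ioc (1/2:ℝ) 2, f1 b x t := by
    rw [← hu1, setIntegral_union (Ioc_disjoint_Ioc_of_le le_rfl) hS2m int1 int2]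
  rw [split2, split1]
  linarith [est1, est2, est3]



lemma one_sub_prod_le_sum {ι : Type*} (s : Finset ι) (f : ι → ℝ)
    (h0 : ∀ i ∈ s, 0 ≤ f i) (h1 : ∀ i ∈ s, f i ≤ 1) :
    1 - ∏ i ∈ s, f i ≤ ∑ i ∈ s, (1 - f i) := by
  induction s using Finset.cons_induction with
  | empty => simp
  | cons a s ha ih =>
    rw [Finset.prod_cons, Finset.sum_cons]
    have h0a := h0 a (Finset.mem_cons_self a s)
    have h1a := h1 a (Finset.mem_cons_self a s)
    have hps : ∏ i ∈ s, f i ≤ 1 :=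
      Finset.prod_le_one (fun i hi => h0 i (Finset.mem_cons_of_mem hi))
        (fun i hi => h1 i (Finset.mem_cons_of_mem hi))
    have ihs := ih (fun i hi => h0 i (Finset.mem_cons_of_mem hi))
      (fun i hi => h1 i (Finset.mem_cons_of_mem hi))
    nlinarith

lemma A_decomp {n : ℕ} (s : Fin n → ℝ) (hs : ∀ i, 0 < s i) :
    (∑ ℓ, s ℓ) + (∏ ℓ, s ℓ)⁻¹
      = ((n : ℝ) + 1) + (∑ ℓ, phi (s ℓ)) + phi ((∏ ℓ, s ℓ)⁻¹) := by
  have hP : 0 < ∏ ℓ, s ℓ := Finset.prod_pos (fun ℓ _ => hs ℓ)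
  have hlog : Real.log (∏ ℓ, s ℓ) = ∑ ℓ, Real.log (s ℓ) :=
    Real.log_prod (fun ℓ _ => (hs ℓ).ne')
  have hsum : ∑ ℓ, phi (s ℓ) = (∑ ℓ, s ℓ) - n - ∑ ℓ, Real.log (s ℓ) := by
    simp only [phi]
    rw [Finset.sum_sub_distrib, Finset.sum_sub_distrib, Finset.sum_const,
      Finset.card_univ, Fintype.card_fin, nsmul_eq_mul, mul_one]
  simp only [phi, Real.log_inv] at *
  rw [hsum, hlog]
  ring


end Stmt13Aux

open Stmt13Aux

set_option maxHeartbeats 2000000 in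
/-- Two-sided Laplace-type asymptotic `H(x) ≍ x^(-n/2) e^(-(n+1)x)` from the proof
of Theorem 2.6, where `H(x) = ∫_{(0,∞)ⁿ} exp(-x A(s)) ∏ sₗ^(βₗ) ds` and
`A(s) = ∑ sₗ + (∏ sₗ)⁻¹`. -/
theorem stmt13 (n : ℕ) (hn : 1 ≤ n) (β : Fin n → ℝ) (H : ℝ → ℝ)
    (hH : ∀ x, H x = ∫ s in {s : Fin n → ℝ | ∀ i, 0 < s i},
        Real.exp (-x * ((∑ ℓ, s ℓ) + (∏ ℓ, s ℓ)⁻¹)) * ∏ ℓ, s ℓ ^ (β ℓ)) :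
    ∃ b₁ > 0, ∃ b₂ > 0, ∃ x₁ > 0, ∀ x ≥ x₁,
      b₁ * x ^ (-(n : ℝ) / 2) * Real.exp (-((n : ℝ) + 1) * x) ≤ H x ∧
        H x ≤ b₂ * x ^ (-(n : ℝ) / 2) * Real.exp (-((n : ℝ) + 1) * x) := by
  choose C hCpos hC using fun ℓ : Fin n => oneDim (β ℓ)
  have hn1 : (1:ℝ) ≤ (n:ℝ) := by exact_mod_cast hn
  set K : ℝ := 2 * (n:ℝ) + 4 * (n:ℝ)^2 with hK
  set m : Fin n → ℝ := fun ℓ => min 1 ((1/2 : ℝ) ^ (β ℓ)) with hm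
  have hmpos : ∀ ℓ, 0 < m ℓ := fun ℓ =>
    lt_min one_pos (Real.rpow_pos_of_pos (by norm_num) _)
  have hCprodpos : 0 < ∏ ℓ, C ℓ := Finset.prod_pos fun ℓ _ => hCpos ℓ
  have hmprodpos : 0 < ∏ ℓ, m ℓ := Finset.prod_pos fun ℓ _ => hmpos ℓ
  have hsumabs : 0 ≤ ∑ j, |β j| := Finset.sum_nonneg fun j _ => abs_nonneg _
  refine ⟨Real.exp (-K) * ∏ ℓ, m ℓ, by positivity,
    ∏ ℓ, C ℓ, hCprodpos,
    4*(n:ℝ)^2 + 66 + 2 * ∑ j, |β j|, by positivity, fun x hx => ?_⟩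
  -- basic facts about x
  have habs : ∀ ℓ : Fin n, |β ℓ| ≤ ∑ j, |β j| := fun ℓ =>
    Finset.single_le_sum (fun j _ => abs_nonneg (β j)) (Finset.mem_univ ℓ)
  have hx66 : (66:ℝ) ≤ x := by nlinarith [sq_nonneg (n:ℝ)]
  have hn2 : 4*(n:ℝ)^2 ≤ x := by nlinarith
  have hx0 : (0:ℝ) < x := by linarith
  have hxl : ∀ ℓ : Fin n, 2 * |β ℓ| + 66 ≤ x := fun ℓ => by
    have := habs ℓ; nlinarith [sq_nonneg (n:ℝ)]
  have hpow : (x ^ (-(1:ℝ)/2))^(n:ℕ) = x ^ (-(n:ℝ)/2) := by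
    rw [← Real.rpow_natCast (x ^ (-(1:ℝ)/2)) n, ← Real.rpow_mul hx0.le]
    congr 1; push_cast; ring
  -- the orthant
  set Ω : Set (Fin n → ℝ) := {s | ∀ i, 0 < s i} with hΩ
  have hΩm : MeasurableSet Ω := by
    have : Ω = Set.pi univ (fun _ => Ioi (0:ℝ)) := by
      ext s; simp [hΩ, Set.mem_pi]
    rw [this]; exact MeasurableSet.univ_pi fun _ => measurableSet_Ioi
  -- the integrand
  set F : (Fin n → ℝ) → ℝ := fun s =>
    Real.exp (-x * ((∑ ℓ, s ℓ) + (∏ ℓ, s ℓ)⁻¹)) * ∏ ℓ, s ℓ ^ (β ℓ) with hF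
  have hrm : ∀ bb : ℝ, Measurable fun t : ℝ => t ^ bb := fun bb => by measurability
  have hFm : Measurable F := by
    have mA : Measurable fun s : Fin n → ℝ => (∑ ℓ, s ℓ) + (∏ ℓ, s ℓ)⁻¹ :=
      (Finset.measurable_sum Finset.univ fun ℓ _ => measurable_pi_apply ℓ).add
        (Finset.measurable_prod Finset.univ fun ℓ _ => measurable_pi_apply ℓ).inv
    exact ((mA.const_mul (-x)).exp).mul
      (Finset.measurable_prod Finset.univ fun ℓ _ =>
        (hrm (β ℓ)).comp (measurable_pi_apply ℓ))
  have hFnn : ∀ s ∈ Ω, 0 ≤ F s := fun s hs =>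
    mul_nonneg (Real.exp_pos _).le
      (Finset.prod_nonneg fun ℓ _ => Real.rpow_nonneg (hs ℓ).le _)
  -- the dominating product function
  set g : Fin n → ℝ → ℝ := fun ℓ => (Ioi (0:ℝ)).indicator (f1 (β ℓ) x) with hg
  have hgnn : ∀ ℓ t, 0 ≤ g ℓ t := fun ℓ t =>
    Set.indicator_nonneg (fun u _ => f1_nonneg _ _ u) t
  have hgint : ∀ ℓ, Integrable (g ℓ) := fun ℓ =>
    (integrable_indicator_iff measurableSet_Ioi).2 ((hC ℓ x (hxl ℓ)).1)
  have hgval : ∀ ℓ, (∫ t, g ℓ t) = ∫ t in Ioi 0, f1 (β ℓ) x t := fun ℓ =>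
    integral_indicator measurableSet_Ioi
  set G : (Fin n → ℝ) → ℝ := fun s =>
    Real.exp (-((n:ℝ)+1)*x) * ∏ ℓ, g ℓ (s ℓ) with hG
  have hGint : Integrable G :=
    (Integrable.fintype_prod (f := fun ℓ => g ℓ) hgint).const_mul _
  -- pointwise domination
  have hpt : ∀ s, Ω.indicator F s ≤ G s := by
    intro s
    by_cases hsΩ : s ∈ Ω
    · rw [Set.indicator_of_mem hsΩ]
      have hsi : ∀ i, 0 < s i := hsΩ
      have hP : 0 < ∏ ℓ, s ℓ := Finset.prod_pos fun ℓ _ => hsi ℓ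
      have hprod : ∏ ℓ, g ℓ (s ℓ) = ∏ ℓ, f1 (β ℓ) x (s ℓ) :=
        Finset.prod_congr rfl fun ℓ _ => Set.indicator_of_mem (hsi ℓ) _
      have hf1prod : ∏ ℓ, f1 (β ℓ) x (s ℓ)
          = Real.exp (∑ ℓ, (-(x * phi (s ℓ)) + β ℓ * Real.log (s ℓ))) := by
        rw [Real.exp_sum]
        exact Finset.prod_congr rfl fun ℓ _ => rfl
      have hrpow : ∏ ℓ, s ℓ ^ (β ℓ) = Real.exp (∑ ℓ, β ℓ * Real.log (s ℓ)) := by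
        rw [Real.exp_sum]
        exact Finset.prod_congr rfl fun ℓ _ => by
          rw [Real.rpow_def_of_pos (hsi ℓ), mul_comm]
      have key : F s = Real.exp (-(x * phi ((∏ ℓ, s ℓ)⁻¹)))
          * (Real.exp (-((n:ℝ)+1)*x) * ∏ ℓ, f1 (β ℓ) x (s ℓ)) := by
        simp only [hF]
        rw [hrpow, hf1prod, ← Real.exp_add, ← Real.exp_add, ← Real.exp_add]
        congr 1
        have hd := A_decomp s hsi
        have hsplit : ∑ ℓ, (-(x * phi (s ℓ)) + β ℓ * Real.log (s ℓ))
            = -(x * ∑ ℓ, phi (s ℓ)) + ∑ ℓ, β ℓ * Real.log (s ℓ) := by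
          rw [Finset.sum_add_distrib, Finset.mul_sum, ← Finset.sum_neg_distrib]
        rw [hsplit, hd]
        ring
      have h1 : Real.exp (-(x * phi ((∏ ℓ, s ℓ)⁻¹))) ≤ 1 := by
        rw [Real.exp_le_one_iff]
        have := phi_nonneg (inv_pos.2 hP)
        nlinarith [hx0.le]
      have h2 : 0 ≤ Real.exp (-((n:ℝ)+1)*x) * ∏ ℓ, f1 (β ℓ) x (s ℓ) :=
        mul_nonneg (Real.exp_pos _).le
          (Finset.prod_nonneg fun ℓ _ => f1_nonneg _ _ _)
      calc F s = Real.exp (-(x * phi ((∏ ℓ, s ℓ)⁻¹)))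
            * (Real.exp (-((n:ℝ)+1)*x) * ∏ ℓ, f1 (β ℓ) x (s ℓ)) := key
        _ ≤ 1 * (Real.exp (-((n:ℝ)+1)*x) * ∏ ℓ, f1 (β ℓ) x (s ℓ)) :=
            mul_le_mul_of_nonneg_right h1 h2
        _ = G s := by rw [one_mul, ← hprod]
    · rw [Set.indicator_of_notMem hsΩ]
      exact mul_nonneg (Real.exp_pos _).le
        (Finset.prod_nonneg fun ℓ _ => hgnn ℓ _)
  -- upper bound
  have hup : H x ≤ (∏ ℓ, C ℓ) * x ^ (-(n:ℝ)/2) * Real.exp (-((n:ℝ)+1)*x) := by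
    rw [hH x]
    calc ∫ s in Ω, F s = ∫ s, Ω.indicator F s := (integral_indicator hΩm).symm
      _ ≤ ∫ s, G s := integral_mono_of_nonneg
          (ae_of_all _ (fun s => Set.indicator_nonneg hFnn s)) hGint (ae_of_all _ hpt)
      _ = Real.exp (-((n:ℝ)+1)*x) * ∏ ℓ, ∫ t, g ℓ t := by
          rw [hG, integral_const_mul]; congr 1
          exact MeasureTheory.integral_fintype_prod_eq_prod (μ := fun _ => volume) g
      _ ≤ Real.exp (-((n:ℝ)+1)*x) * ((∏ ℓ, C ℓ) * (x ^ (-(1:ℝ)/2))^(n:ℕ)) := by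
          refine mul_le_mul_of_nonneg_left ?_ (Real.exp_pos _).le
          calc ∏ ℓ, ∫ t, g ℓ t ≤ ∏ ℓ, (C ℓ * x ^ (-(1:ℝ)/2)) := by
                refine Finset.prod_le_prod (fun ℓ _ => integral_nonneg (hgnn ℓ)) ?_
                intro ℓ _
                rw [hgval ℓ]
                exact (hC ℓ x (hxl ℓ)).2
            _ = (∏ ℓ, C ℓ) * (x ^ (-(1:ℝ)/2))^(n:ℕ) := by
                rw [Finset.prod_mul_distrib, Finset.prod_const, Finset.card_univ,
                  Fintype.card_fin]
      _ = (∏ ℓ, C ℓ) * x ^ (-(n:ℝ)/2) * Real.exp (-((n:ℝ)+1)*x) := by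
          rw [hpow]; ring
  -- integrability on the orthant
  have hFint : IntegrableOn F Ω := by
    refine (integrable_indicator_iff hΩm).1 ?_
    refine hGint.mono' (hFm.indicator hΩm).aestronglyMeasurable (ae_of_all _ fun s => ?_)
    rw [Real.norm_eq_abs, abs_of_nonneg (Set.indicator_nonneg hFnn s)]
    exact hpt s
  -- lower bound
  set ε : ℝ := (Real.sqrt x)⁻¹ with hε
  have hsqx : 0 < Real.sqrt x := Real.sqrt_pos.2 hx0
  have hε0 : 0 < ε := inv_pos.2 hsqx
  have h2n : 2*(n:ℝ) ≤ Real.sqrt x := by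
    have h1 : Real.sqrt (4*(n:ℝ)^2) ≤ Real.sqrt x := Real.sqrt_le_sqrt hn2
    rwa [show 4*(n:ℝ)^2 = (2*(n:ℝ))^2 by ring, Real.sqrt_sq (by positivity)] at h1
  have hnε : (n:ℝ) * ε ≤ 1/2 := by
    rw [hε, show (n:ℝ) * (Real.sqrt x)⁻¹ = (n:ℝ) / Real.sqrt x by ring,
      div_le_iff₀ hsqx]
    nlinarith
  have hε2 : ε ≤ 1/2 := by nlinarith
  have hεsq : ε^2 = x⁻¹ := by
    rw [hε, inv_pow, sq, Real.mul_self_sqrt hx0.le]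
  set box : Set (Fin n → ℝ) := Set.pi univ (fun _ => Icc (1-ε) 1) with hbox
  have hboxm : MeasurableSet box := MeasurableSet.univ_pi fun _ => measurableSet_Icc
  have hsub : box ⊆ Ω := by
    intro s hs i
    have h := hs i (Set.mem_univ i)
    have h1 : 1 - ε ≤ s i := h.1
    show (0:ℝ) < s i
    linarith
  -- pointwise lower bound on the box
  have hc : ∀ s ∈ box, Real.exp (-((n:ℝ)+1)*x - K) * ∏ ℓ, m ℓ ≤ F s := by
    intro s hs
    have hsi : ∀ i, 0 < s i := hsub hs
    have hge : ∀ i, 1 - ε ≤ s i := fun i => (hs i (Set.mem_univ i)).1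
    have hle1 : ∀ i, s i ≤ 1 := fun i => (hs i (Set.mem_univ i)).2
    have hhalf : ∀ i, 1/2 ≤ s i := fun i => le_trans (by linarith) (hge i)
    have hphi : ∀ i, phi (s i) ≤ 2 * ε^2 := by
      intro i
      have h1 := phi_le (hsi i)
      have h2 : (s i - 1)^2 ≤ ε^2 := by nlinarith [hge i, hle1 i]
      have h3 : (s i - 1)^2 / s i ≤ 2 * (s i - 1)^2 := by
        rw [div_le_iff₀ (hsi i)]
        nlinarith [sq_nonneg (s i - 1), hhalf i]
      linarith
    have hsum : ∑ ℓ, phi (s ℓ) ≤ (n:ℝ) * (2 * ε^2) := by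
      calc ∑ ℓ, phi (s ℓ) ≤ ∑ _ℓ : Fin n, 2 * ε^2 :=
            Finset.sum_le_sum fun ℓ _ => hphi ℓ
        _ = (n:ℝ) * (2 * ε^2) := by
            rw [Finset.sum_const, Finset.card_univ, Fintype.card_fin, nsmul_eq_mul]
    have hP : 0 < ∏ ℓ, s ℓ := Finset.prod_pos fun ℓ _ => hsi ℓ
    have hP1 : ∏ ℓ, s ℓ ≤ 1 :=
      Finset.prod_le_one (fun ℓ _ => (hsi ℓ).le) (fun ℓ _ => hle1 ℓ)
    have h1P : 1 - ∏ ℓ, s ℓ ≤ (n:ℝ) * ε := by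
      have ha := one_sub_prod_le_sum Finset.univ s
        (fun i _ => (hsi i).le) (fun i _ => hle1 i)
      have hb : ∑ ℓ, (1 - s ℓ) ≤ ∑ _ℓ : Fin n, ε :=
        Finset.sum_le_sum fun ℓ _ => by linarith [hge ℓ]
      rw [Finset.sum_const, Finset.card_univ, Fintype.card_fin, nsmul_eq_mul] at hb
      linarith
    have hPhalf : 1/2 ≤ ∏ ℓ, s ℓ := by linarith
    have hphiP : phi ((∏ ℓ, s ℓ)⁻¹) ≤ 4*(n:ℝ)^2 * ε^2 := by
      set P := ∏ ℓ, s ℓ with hPdef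
      have hPinv : 0 < P⁻¹ := inv_pos.2 hP
      have hPP : P⁻¹ * P = 1 := inv_mul_cancel₀ hP.ne'
      have hinv1 : 1 ≤ P⁻¹ := by nlinarith
      have h1 := phi_le hPinv
      have h2 : (P⁻¹ - 1)^2 / P⁻¹ ≤ (P⁻¹ - 1)^2 :=
        div_le_self (sq_nonneg _) hinv1
      have h3 : P⁻¹ - 1 ≤ 2*((n:ℝ)*ε) := by
        have hformula : P⁻¹ - 1 = (1 - P) * P⁻¹ := by
          field_simp
        rw [hformula]
        have hnn : 0 ≤ (n:ℝ)*ε := by positivity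
        nlinarith [h1P, hPhalf, hPinv, hPP]
      have h4 : 0 ≤ P⁻¹ - 1 := by linarith
      calc phi P⁻¹ ≤ (P⁻¹ - 1)^2 := h1.trans h2
        _ ≤ (2*((n:ℝ)*ε))^2 := by nlinarith
        _ = 4*(n:ℝ)^2*ε^2 := by ring
    have hA : (∑ ℓ, s ℓ) + (∏ ℓ, s ℓ)⁻¹ ≤ ((n:ℝ)+1) + K * x⁻¹ := by
      rw [A_decomp s hsi]
      have : (n:ℝ) * (2*ε^2) + 4*(n:ℝ)^2*ε^2 = K * ε^2 := by rw [hK]; ring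
      rw [← hεsq]
      linarith
    have hexp : Real.exp (-((n:ℝ)+1)*x - K) ≤
        Real.exp (-x * ((∑ ℓ, s ℓ) + (∏ ℓ, s ℓ)⁻¹)) := by
      rw [Real.exp_le_exp]
      have hmul := mul_le_mul_of_nonneg_left hA hx0.le
      have hxx : x * x⁻¹ = 1 := mul_inv_cancel₀ hx0.ne'
      nlinarith
    have hprodm : ∏ ℓ, m ℓ ≤ ∏ ℓ, s ℓ ^ (β ℓ) := by
      refine Finset.prod_le_prod (fun ℓ _ => (hmpos ℓ).le) (fun ℓ _ => ?_)
      rcases le_or_gt 0 (β ℓ) with hb | hb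
      · exact le_trans (min_le_right _ _)
          (Real.rpow_le_rpow (by norm_num) (hhalf ℓ) hb)
      · exact le_trans (min_le_left _ _)
          (Real.one_le_rpow_of_pos_of_le_one_of_nonpos (hsi ℓ) (hle1 ℓ) hb.le)
    calc Real.exp (-((n:ℝ)+1)*x - K) * ∏ ℓ, m ℓ
        ≤ Real.exp (-x * ((∑ ℓ, s ℓ) + (∏ ℓ, s ℓ)⁻¹)) * ∏ ℓ, s ℓ ^ (β ℓ) :=
          mul_le_mul hexp hprodm hmprodpos.le (Real.exp_pos _).le
      _ = F s := rfl
  -- volume of the box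
  have hvol : volume box = (ENNReal.ofReal ε)^(n:ℕ) := by
    rw [hbox, volume_pi_pi]
    simp only [Real.volume_Icc, show (1:ℝ) - (1-ε) = ε by ring]
    rw [Finset.prod_const, Finset.card_univ, Fintype.card_fin]
  have hvolne : volume box ≠ ⊤ := by
    rw [hvol]; exact ENNReal.pow_ne_top ENNReal.ofReal_ne_top
  have hvolreal : (volume box).toReal = ε^(n:ℕ) := by
    rw [hvol, ENNReal.toReal_pow, ENNReal.toReal_ofReal hε0.le]
  -- lower bound on H
  have hlow : Real.exp (-K) * (∏ ℓ, m ℓ) * x ^ (-(n:ℝ)/2)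
      * Real.exp (-((n:ℝ)+1)*x) ≤ H x := by
    rw [hH x]
    have hboxint : IntegrableOn F box := hFint.mono_set hsub
    have step1 := setIntegral_ge_of_const_le hboxm hvolne hc hboxint
    have step2 : ∫ s in box, F s ≤ ∫ s in Ω, F s := by
      refine setIntegral_mono_set hFint ?_ (HasSubset.Subset.eventuallyLE hsub)
      exact (ae_restrict_iff' hΩm).2 (ae_of_all _ hFnn)
    have hεn : ε^(n:ℕ) = x ^ (-(n:ℝ)/2) := by
      rw [hε, ← hpow, rpow_neg_half hx0.le]
    rw [measureReal_def, hvolreal, hεn, smul_eq_mul, mul_comm] at step1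
    have heq : Real.exp (-((n:ℝ)+1)*x - K) * (∏ ℓ, m ℓ) * x ^ (-(n:ℝ)/2)
        = Real.exp (-K) * (∏ ℓ, m ℓ) * x ^ (-(n:ℝ)/2) * Real.exp (-((n:ℝ)+1)*x) := by
      rw [sub_eq_add_neg, Real.exp_add]; ring
    calc Real.exp (-K) * (∏ ℓ, m ℓ) * x ^ (-(n:ℝ)/2) * Real.exp (-((n:ℝ)+1)*x)
        = Real.exp (-((n:ℝ)+1)*x - K) * (∏ ℓ, m ℓ) * x ^ (-(n:ℝ)/2) := heq.symm
      _ ≤ ∫ s in box, F s := step1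
      _ ≤ ∫ s in Ω, F s := step2
  exact ⟨hlow, hup⟩
end

section
/- Let p ≥ 1 be an integer and let x > p be a real number. Then (1/(2^{p/2}·Γ(p/2)))·∫_x^∞ t^{p/2−1}·e^{−t/2} dt ≤ (x/p)^{p/2}·e^{−(x−p)/2}. -/
open MeasureTheory

/-- Chernoff bound for the chi-squared tail from the proof of Theorem 2.6: for an
integer `p ≥ 1` and real `x > p`,
`P(χ²_p ≥ x) = (1/(2^(p/2) Γ(p/2))) ∫_x^∞ t^(p/2-1) e^(-t/2) dt ≤ (x/p)^(p/2) e^(-(x-p)/2)`. -/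
theorem stmt14 (p : ℕ) (hp : 1 ≤ p) (x : ℝ) (hx : (p : ℝ) < x) :
    1 / (2 ^ ((p : ℝ) / 2) * Real.Gamma ((p : ℝ) / 2)) *
        ∫ t in Set.Ioi x, t ^ ((p : ℝ) / 2 - 1) * Real.exp (-t / 2) ≤
      (x / (p : ℝ)) ^ ((p : ℝ) / 2) * Real.exp (-(x - (p : ℝ)) / 2) := by
  have hp0 : (0 : ℝ) < p := by exact_mod_cast hp
  have hx0 : (0 : ℝ) < x := hp0.trans hx
  set a : ℝ := (p : ℝ) / 2 with ha_def
  have ha : 0 < a := by positivity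
  set b : ℝ := (p : ℝ) / (2 * x) with hb_def
  have hb : 0 < b := by positivity
  set c : ℝ := Real.exp (-(x - (p : ℝ)) / 2) with hc_def
  have hc : 0 < c := Real.exp_pos _
  -- integrability of the dominating function on Ioi 0
  have hg : IntegrableOn (fun t : ℝ => t ^ (a - 1) * Real.exp (-(b * t))) (Set.Ioi 0) := by
    have := integrableOn_rpow_mul_exp_neg_mul_rpow (s := a - 1) (p := 1) (b := b)
      (by linarith) one_pos hb
    simpa [Real.rpow_one, neg_mul] using this
  have hg' : IntegrableOn (fun t : ℝ => t ^ (a - 1) * Real.exp (-(b * t))) (Set.Ioi x) :=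
    hg.mono_set (Set.Ioi_subset_Ioi hx0.le)
  -- pointwise bound on Ioi x
  have hpoint : ∀ t ∈ Set.Ioi x,
      t ^ (a - 1) * Real.exp (-t / 2) ≤ c * (t ^ (a - 1) * Real.exp (-(b * t))) := by
    intro t ht
    have ht' : x < t := ht
    have h1 : -t / 2 ≤ -(x - (p : ℝ)) / 2 + -(b * t) := by
      have key : (-(x - (p : ℝ)) / 2 + -(b * t)) - (-t / 2)
          = (t - x) * (x - (p : ℝ)) / (2 * x) := by
        rw [hb_def]; field_simp; ring
      nlinarith [mul_nonneg (by linarith : (0:ℝ) ≤ t - x) (by linarith : (0:ℝ) ≤ x - (p:ℝ)),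
        div_nonneg (mul_nonneg (by linarith : (0:ℝ) ≤ t - x) (by linarith : (0:ℝ) ≤ x - (p:ℝ)))
          (by linarith : (0:ℝ) ≤ 2 * x)]
    have h2 : Real.exp (-t / 2) ≤ c * Real.exp (-(b * t)) := by
      rw [hc_def, ← Real.exp_add]
      exact Real.exp_le_exp.2 h1
    have ht0 : (0:ℝ) ≤ t ^ (a - 1) := Real.rpow_nonneg (by linarith) _
    calc t ^ (a - 1) * Real.exp (-t / 2) ≤ t ^ (a - 1) * (c * Real.exp (-(b * t))) :=
          mul_le_mul_of_nonneg_left h2 ht0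
      _ = c * (t ^ (a - 1) * Real.exp (-(b * t))) := by ring
  -- integrability of the integrand on Ioi x
  have hf : IntegrableOn (fun t : ℝ => t ^ (a - 1) * Real.exp (-t / 2)) (Set.Ioi x) := by
    refine Integrable.mono' (hg'.const_mul c) ?_ ?_
    · have : Measurable (fun t : ℝ => t ^ (a - 1) * Real.exp (-t / 2)) := by fun_prop
      exact this.aestronglyMeasurable
    · refine (ae_restrict_iff' measurableSet_Ioi).2 (Filter.Eventually.of_forall fun t ht => ?_)
      have ht' : x < t := ht
      have ht0 : (0:ℝ) ≤ t ^ (a - 1) := Real.rpow_nonneg (by linarith) _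
      rw [Real.norm_eq_abs, abs_of_nonneg (mul_nonneg ht0 (Real.exp_pos _).le)]
      exact hpoint t ht
  -- chain of integral inequalities
  have step1 : (∫ t in Set.Ioi x, t ^ (a - 1) * Real.exp (-t / 2))
      ≤ ∫ t in Set.Ioi x, c * (t ^ (a - 1) * Real.exp (-(b * t))) :=
    setIntegral_mono_on hf (hg'.const_mul c) measurableSet_Ioi hpoint
  have step2 : (∫ t in Set.Ioi x, c * (t ^ (a - 1) * Real.exp (-(b * t))))
      ≤ ∫ t in Set.Ioi 0, c * (t ^ (a - 1) * Real.exp (-(b * t))) := by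
    refine setIntegral_mono_set (hg.const_mul c) ?_
      (HasSubset.Subset.eventuallyLE (Set.Ioi_subset_Ioi hx0.le))
    refine (ae_restrict_iff' measurableSet_Ioi).2 (Filter.Eventually.of_forall fun t ht => ?_)
    have ht0 : (0:ℝ) ≤ t ^ (a - 1) := Real.rpow_nonneg (le_of_lt ht) _
    positivity
  have hgval : (∫ t in Set.Ioi 0, t ^ (a - 1) * Real.exp (-(b * t)))
      = (1 / b) ^ a * Real.Gamma a := Real.integral_rpow_mul_exp_neg_mul_Ioi ha hb
  have step3 : (∫ t in Set.Ioi 0, c * (t ^ (a - 1) * Real.exp (-(b * t))))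
      = c * ((1 / b) ^ a * Real.Gamma a) := by
    rw [integral_const_mul, hgval]
  have hG : 0 < Real.Gamma a := Real.Gamma_pos_of_pos ha
  have h2a : (0:ℝ) < 2 ^ a := Real.rpow_pos_of_pos two_pos a
  have hchain : (∫ t in Set.Ioi x, t ^ (a - 1) * Real.exp (-t / 2))
      ≤ c * ((1 / b) ^ a * Real.Gamma a) := by
    exact step1.trans (step2.trans step3.le)
  have hbval : (1 / b : ℝ) = 2 * (x / (p : ℝ)) := by
    rw [hb_def]; field_simp
  have hpow : (1 / b : ℝ) ^ a = 2 ^ a * (x / (p : ℝ)) ^ a := by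
    rw [hbval, Real.mul_rpow (by norm_num) (by positivity)]
  calc 1 / (2 ^ a * Real.Gamma a) * ∫ t in Set.Ioi x, t ^ (a - 1) * Real.exp (-t / 2)
      ≤ 1 / (2 ^ a * Real.Gamma a) * (c * ((1 / b) ^ a * Real.Gamma a)) := by
        apply mul_le_mul_of_nonneg_left hchain (by positivity)
    _ = (x / (p : ℝ)) ^ a * c := by
        rw [hpow]; field_simp
end

section
/- Let a > 0 be a real number. Then for every λ > 0, λ^a·e^{−λ} + (2λ − a)·γ(a, λ) > 0, where γ(a, λ) = ∫_0^λ t^{a−1}·e^{−t} dt is the lower incomplete gamma function. -/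
open MeasureTheory Set intervalIntegral

/-- Key positivity from the proof of Theorem 3.1: for `a > 0` and `λ > 0`,
`λ^a e^(-λ) + (2λ - a) γ(a, λ) > 0`, where `γ(a, λ) = ∫_0^λ t^(a-1) e^(-t) dt`
is the lower incomplete gamma function. -/
theorem stmt16 (a : ℝ) (ha : 0 < a) (lam : ℝ) (hlam : 0 < lam) :
    0 < lam ^ a * Real.exp (-lam) +
        (2 * lam - a) * ∫ t in (0 : ℝ)..lam, t ^ (a - 1) * Real.exp (-t) := by
  have hfint : IntervalIntegrable (fun t => t ^ (a-1) * Real.exp (-t)) volume 0 lam :=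
    (intervalIntegrable_rpow' (by linarith)).mul_continuousOn
      (Real.continuous_exp.comp continuous_neg).continuousOn
  have hgint : IntervalIntegrable (fun t => t ^ a * Real.exp (-t)) volume 0 lam :=
    (intervalIntegrable_rpow' (by linarith)).mul_continuousOn
      (Real.continuous_exp.comp continuous_neg).continuousOn
  have hint : IntervalIntegrable
      (fun t => a * (t ^ (a-1) * Real.exp (-t)) - t ^ a * Real.exp (-t)) volume 0 lam :=
    (hfint.const_mul a).sub hgint
  have hIBP : lam ^ a * Real.exp (-lam) =
      ∫ t in (0:ℝ)..lam, (a * (t ^ (a-1) * Real.exp (-t)) - t ^ a * Real.exp (-t)) := by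
    have hcont : ContinuousOn (fun t : ℝ => t ^ a * Real.exp (-t)) (Icc 0 lam) := by
      apply ContinuousOn.mul
      · intro x _
        exact ((Real.continuousAt_rpow_const x a (Or.inr ha.le))).continuousWithinAt
      · exact (Real.continuous_exp.comp continuous_neg).continuousOn
    have hderiv : ∀ x ∈ Ioo (0:ℝ) lam, HasDerivAt (fun t : ℝ => t ^ a * Real.exp (-t))
        (a * (x ^ (a-1) * Real.exp (-x)) - x ^ a * Real.exp (-x)) x := by
      intro x hx
      have h1 : HasDerivAt (fun t : ℝ => t ^ a) (a * x ^ (a-1)) x :=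
        Real.hasDerivAt_rpow_const (Or.inl hx.1.ne')
      have h2 : HasDerivAt (fun t : ℝ => Real.exp (-t)) (-Real.exp (-x)) x := by
        simpa using (hasDerivAt_neg x).exp
      exact (h1.mul h2).congr_deriv (by ring)
    have h := intervalIntegral.integral_eq_sub_of_hasDerivAt_of_le hlam.le hcont hderiv hint
    rw [h, Real.zero_rpow ha.ne']
    ring
  have key : lam ^ a * Real.exp (-lam) +
      (2 * lam - a) * ∫ t in (0 : ℝ)..lam, t ^ (a - 1) * Real.exp (-t)
      = ∫ t in (0:ℝ)..lam, (2 * lam - t) * (t ^ (a-1) * Real.exp (-t)) := by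
    have hcongr : ∫ t in (0:ℝ)..lam, (2 * lam - t) * (t ^ (a-1) * Real.exp (-t))
        = ∫ t in (0:ℝ)..lam,
          ((2 * lam - a) * (t ^ (a-1) * Real.exp (-t)) +
            (a * (t ^ (a-1) * Real.exp (-t)) - t ^ a * Real.exp (-t))) := by
      apply intervalIntegral.integral_congr
      intro t ht
      rw [uIcc_of_le hlam.le] at ht
      have hta : t ^ a = t ^ (a-1) * t := by
        rcases eq_or_lt_of_le ht.1 with h | h
        · rw [← h, Real.zero_rpow ha.ne', mul_zero]
        · rw [← Real.rpow_add_one h.ne' (a-1)]; ring_nf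
      simp only [hta]; ring
    rw [hcongr, intervalIntegral.integral_add (hfint.const_mul _) hint,
      intervalIntegral.integral_const_mul, ← hIBP]
    ring
  rw [key]
  apply intervalIntegral.intervalIntegral_pos_of_pos_on
  · exact hfint.continuousOn_mul (by fun_prop)
  · intro x hx
    have hx1 : 0 < x ^ (a-1) := Real.rpow_pos_of_pos hx.1 _
    have : 0 < 2 * lam - x := by nlinarith [hx.2]
    positivity
  · exact hlam
end

section
/- Let a > 0 be a real number and let γ(s, λ) = ∫_0^λ t^{s−1}·e^{−t} dt denote the lower incomplete gamma function. Then for every λ > 0, γ(a, λ)·(2·γ(a+2, λ) − (a+2)·γ(a+1, λ)) ≤ γ(a+1, λ)². -/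
/-!
The recurrence `γ(s+1, λ) = s γ(s, λ) - λ^s e^{-λ}`, applied at `s = a` and `s = a + 1`, turns the
difference of the two sides into `λ^a e^{-λ} (γ(a+1, λ) - 2λ γ(a, λ))`. This is nonpositive
because `t ≤ λ` on `[0, λ]` gives `γ(a+1, λ) ≤ λ γ(a, λ)`.
-/

open MeasureTheory

noncomputable def lowerIncompleteGamma (s x : ℝ) : ℝ :=
  ∫ t in (0 : ℝ)..x, t ^ (s - 1) * Real.exp (-t)

namespace lowerIncompleteGamma

variable {s x : ℝ}

lemma intervalIntegrable_integrand (hs : 0 < s) :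
    IntervalIntegrable (fun t : ℝ => t ^ (s - 1) * Real.exp (-t)) volume 0 x :=
  (intervalIntegral.intervalIntegrable_rpow' (by linarith)).mul_continuousOn (by fun_prop)

lemma ofReal_eq_partialGamma (hx : 0 ≤ x) :
    (lowerIncompleteGamma s x : ℂ) = Complex.partialGamma s x := by
  rw [lowerIncompleteGamma, Complex.partialGamma, ← intervalIntegral.integral_ofReal]
  refine intervalIntegral.integral_congr fun t ht => ?_
  have ht0 : 0 ≤ t := by simpa [hx] using ht.1
  simp only [Complex.ofReal_mul, Complex.ofReal_exp, Complex.ofReal_neg,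
    Complex.ofReal_cpow ht0, Complex.ofReal_sub, Complex.ofReal_one]
  ring

lemma add_one (hs : 0 < s) (hx : 0 ≤ x) :
    lowerIncompleteGamma (s + 1) x = s * lowerIncompleteGamma s x - x ^ s * Real.exp (-x) := by
  have h := Complex.partialGamma_add_one (s := s) (by simpa using hs) hx
  rw [← Complex.ofReal_one, ← Complex.ofReal_add, ← ofReal_eq_partialGamma hx,
    ← ofReal_eq_partialGamma hx, ← Complex.ofReal_cpow hx] at h
  apply Complex.ofReal_injective
  rw [h]
  push_cast
  ring

lemma nonneg (hx : 0 ≤ x) : 0 ≤ lowerIncompleteGamma s x :=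
  intervalIntegral.integral_nonneg hx fun t ht => by
    have := Real.rpow_nonneg ht.1 (s - 1)
    positivity

lemma add_one_le_mul (hs : 0 < s) (hx : 0 ≤ x) :
    lowerIncompleteGamma (s + 1) x ≤ x * lowerIncompleteGamma s x := by
  rw [lowerIncompleteGamma, lowerIncompleteGamma, ← intervalIntegral.integral_const_mul]
  refine intervalIntegral.integral_mono_on hx (intervalIntegrable_integrand (by linarith))
    ((intervalIntegrable_integrand hs).const_mul x) fun t ht => ?_
  have hpow : t ^ (s + 1 - 1) = t ^ (s - 1) * t := by
    rw [← Real.rpow_add_one' ht.1 (by linarith)]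
    ring_nf
  have := mul_nonneg (sub_nonneg.2 ht.2)
    (mul_nonneg (Real.rpow_nonneg ht.1 (s - 1)) (Real.exp_pos (-t)).le)
  rw [hpow]
  linarith

lemma mul_sub_eq_sq_add (hs : 0 < s) (hx : 0 ≤ x) :
    lowerIncompleteGamma s x * (2 * lowerIncompleteGamma (s + 2) x
        - (s + 2) * lowerIncompleteGamma (s + 1) x)
      = lowerIncompleteGamma (s + 1) x ^ 2 + x ^ s * Real.exp (-x)
        * (lowerIncompleteGamma (s + 1) x - 2 * x * lowerIncompleteGamma s x) := by
  have rec₂ := add_one (s := s + 1) (by linarith) hx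
  rw [add_assoc, one_add_one_eq_two, Real.rpow_add_one' hx (by linarith)] at rec₂
  rw [rec₂, add_one hs hx]
  ring

lemma mul_sub_le_sq (hs : 0 < s) (hx : 0 ≤ x) :
    lowerIncompleteGamma s x * (2 * lowerIncompleteGamma (s + 2) x
        - (s + 2) * lowerIncompleteGamma (s + 1) x) ≤ lowerIncompleteGamma (s + 1) x ^ 2 := by
  have hE : 0 ≤ x ^ s * Real.exp (-x) := by positivity
  rw [mul_sub_eq_sq_add hs hx]
  linarith [mul_le_mul_of_nonneg_left (add_one_le_mul hs hx) hE,
    mul_nonneg hE (mul_nonneg hx (nonneg (s := s) hx))]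

end lowerIncompleteGamma

/-- Incomplete-gamma inequality from the proof of Theorem 3.1: for `a > 0` and
`λ > 0`, `γ(a,λ) (2 γ(a+2,λ) - (a+2) γ(a+1,λ)) ≤ γ(a+1,λ)²`, where
`γ(s,λ) = ∫_0^λ t^(s-1) e^(-t) dt` is the lower incomplete gamma function. -/
theorem stmt17 (a : ℝ) (ha : 0 < a) (lam : ℝ) (hlam : 0 < lam)
    (γ : ℝ → ℝ → ℝ)
    (hγ : ∀ s l, γ s l = ∫ t in (0 : ℝ)..l, t ^ (s - 1) * Real.exp (-t)) :
    γ a lam * (2 * γ (a + 2) lam - (a + 2) * γ (a + 1) lam) ≤ γ (a + 1) lam ^ 2 := by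
  obtain rfl : γ = lowerIncompleteGamma := funext₂ hγ
  exact lowerIncompleteGamma.mul_sub_le_sq ha hlam.le
end

section
/- Let p ≥ 5 be an integer and define m : ℝ^p → ℝ by m(y) = ∫_0^1 u^{p−3}·exp(−‖y‖²·u/2) du, where ‖·‖ is the Euclidean norm. Then m is everywhere positive and twice continuously differentiable, and √m is superharmonic on ℝ^p: Δ(√m)(y) ≤ 0 for every y ∈ ℝ^p, where Δ is the Laplacian on ℝ^p. -/
open MeasureTheory

section Aux
open intervalIntegral Real Metric

noncomputable def J (j : ℕ) (t : ℝ) : ℝ := ∫ u in (0:ℝ)..1, u ^ j * Real.exp (-t * u / 2)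

lemma J_cont (j : ℕ) (t : ℝ) : Continuous (fun u : ℝ => u ^ j * Real.exp (-t * u / 2)) := by
  fun_prop

lemma J_integrable (j : ℕ) (t : ℝ) :
    IntervalIntegrable (fun u : ℝ => u ^ j * Real.exp (-t * u / 2)) volume 0 1 :=
  (J_cont j t).intervalIntegrable 0 1

lemma J_pos (j : ℕ) (t : ℝ) : 0 < J j t := by
  apply intervalIntegral.intervalIntegral_pos_of_pos_on (J_integrable j t)
  · intro u hu
    exact mul_pos (pow_pos hu.1 j) (Real.exp_pos _)
  · norm_num

lemma J_le (j : ℕ) (t : ℝ) : J (j+1) t ≤ J j t := by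
  apply intervalIntegral.integral_mono_on (by norm_num) (J_integrable (j+1) t) (J_integrable j t)
  intro u hu
  have h1 : u ^ (j+1) ≤ u ^ j := pow_le_pow_of_le_one hu.1 hu.2 (by omega)
  exact mul_le_mul_of_nonneg_right h1 (Real.exp_pos _).le

lemma hasDerivAt_J (j : ℕ) (t₀ : ℝ) : HasDerivAt (J j) (-(1/2) * J (j+1) t₀) t₀ := by
  have key := intervalIntegral.hasDerivAt_integral_of_dominated_loc_of_deriv_le
    (F := fun t u => u ^ j * Real.exp (-t * u / 2))
    (F' := fun t u => -(1/2) * (u ^ (j+1) * Real.exp (-t * u / 2)))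
    (a := (0:ℝ)) (b := 1) (μ := volume)
    (bound := fun _ => (1/2) * Real.exp ((|t₀| + 1) / 2))
    (Metric.ball_mem_nhds t₀ one_pos)
    (Filter.Eventually.of_forall fun t => (J_cont j t).aestronglyMeasurable)
    (J_integrable j t₀)
    ((continuous_const.mul (J_cont (j+1) t₀)).aestronglyMeasurable)
    ?_ (intervalIntegrable_const) ?_
  · have h2 : (∫ u in (0:ℝ)..1, -(1/2) * (u ^ (j+1) * Real.exp (-t₀ * u / 2)))
        = -(1/2) * J (j+1) t₀ := by
      rw [intervalIntegral.integral_const_mul]; rfl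
    have hk := key.2
    rw [h2] at hk
    exact hk
  · refine Filter.Eventually.of_forall fun u hu t ht => ?_
    rw [Set.uIoc_of_le (by norm_num)] at hu
    rw [Metric.mem_ball, Real.dist_eq] at ht
    have hu0 : 0 < u := hu.1
    have hu1 : u ≤ 1 := hu.2
    have h1 : |u ^ (j+1)| ≤ 1 := by
      rw [abs_of_nonneg (by positivity)]
      exact pow_le_one₀ hu0.le hu1
    have h2 : Real.exp (-t * u / 2) ≤ Real.exp ((|t₀| + 1) / 2) := by
      apply Real.exp_le_exp.2
      have : -t * u ≤ |t₀| + 1 := by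
        have h3 : -t ≤ |t| := neg_le_abs t
        have h4 : |t| ≤ |t₀| + 1 := by
          have := abs_sub_abs_le_abs_sub t t₀
          linarith
        rcases le_or_gt (-t) 0 with h | h
        · nlinarith [mul_nonneg (neg_nonneg.2 h) hu0.le, abs_nonneg t₀]
        · nlinarith [mul_le_mul_of_nonneg_left hu1 h.le]
      linarith
    calc ‖-(1/2) * (u ^ (j+1) * Real.exp (-t * u / 2))‖
        = (1/2) * (|u ^ (j+1)| * Real.exp (-t * u / 2)) := by
          rw [norm_mul, norm_mul]
          simp [abs_of_nonneg (Real.exp_pos _).le, Real.norm_eq_abs]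
      _ ≤ (1/2) * (1 * Real.exp ((|t₀| + 1) / 2)) := by
          apply mul_le_mul_of_nonneg_left _ (by norm_num)
          exact mul_le_mul h1 h2 (Real.exp_pos _).le zero_le_one
      _ = (1/2) * Real.exp ((|t₀| + 1) / 2) := by ring
  · refine Filter.Eventually.of_forall fun u hu t _ => ?_
    have hl : HasDerivAt (fun t : ℝ => -t * u / 2) (-u/2) t := by
      simpa using ((hasDerivAt_id t).neg.mul_const u).div_const 2
    have h := (Real.hasDerivAt_exp (-t * u / 2)).comp t hl
    have h2 := h.const_mul (u ^ j)
    refine h2.congr_deriv ?_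
    ring

lemma J_ibp (j : ℕ) (t : ℝ) :
    (t/2) * J (j+1) t = (j+1) * J j t - Real.exp (-t/2) := by
  have hderiv : ∀ u ∈ Set.uIcc (0:ℝ) 1,
      HasDerivAt (fun u : ℝ => u ^ (j+1) * Real.exp (-t * u / 2))
        (((j:ℝ)+1) * (u ^ j * Real.exp (-t * u / 2)) - (t/2) * (u ^ (j+1) * Real.exp (-t * u / 2))) u := by
    intro u _
    have h1 : HasDerivAt (fun u : ℝ => u ^ (j+1)) (((j:ℝ)+1) * u ^ j) u := by
      simpa using hasDerivAt_pow (j+1) u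
    have h2 : HasDerivAt (fun u : ℝ => Real.exp (-t * u / 2)) (-t/2 * Real.exp (-t * u / 2)) u := by
      have hl : HasDerivAt (fun u : ℝ => -t * u / 2) (-t/2) u := by
        simpa using ((hasDerivAt_id u).const_mul (-t)).div_const 2
      simpa [mul_comm, Function.comp_def] using (Real.hasDerivAt_exp (-t * u / 2)).comp u hl
    refine (h1.mul h2).congr_deriv ?_
    ring
  have hint : IntervalIntegrable (fun u : ℝ =>
      ((j:ℝ)+1) * (u ^ j * Real.exp (-t * u / 2)) - (t/2) * (u ^ (j+1) * Real.exp (-t * u / 2)))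
      volume 0 1 :=
    ((J_integrable j t).const_mul _).sub ((J_integrable (j+1) t).const_mul _)
  have key := intervalIntegral.integral_eq_sub_of_hasDerivAt hderiv hint
  rw [intervalIntegral.integral_sub ((J_integrable j t).const_mul _)
    ((J_integrable (j+1) t).const_mul _), intervalIntegral.integral_const_mul,
    intervalIntegral.integral_const_mul] at key
  have h1 : ((1:ℝ)) ^ (j+1) * Real.exp (-t * 1 / 2) = Real.exp (-t/2) := by norm_num
  have h0 : ((0:ℝ)) ^ (j+1) * Real.exp (-t * 0 / 2) = 0 := by simp
  rw [h1, h0] at key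
  unfold J
  linarith [key]

noncomputable def Jphi (n : ℕ) (t : ℝ) : ℝ := Real.sqrt (J n t)
noncomputable def Jphi1 (n : ℕ) (t : ℝ) : ℝ := (2 * Jphi n t)⁻¹ * (-(1/2) * J (n+1) t)
noncomputable def Jphi2 (n : ℕ) (t : ℝ) : ℝ :=
  -(2 * Jphi1 n t) / (2 * Jphi n t)^2 * (-(1/2) * J (n+1) t)
    + (2 * Jphi n t)⁻¹ * (-(1/2) * (-(1/2) * J (n+2) t))

lemma Jphi_pos (n : ℕ) (t : ℝ) : 0 < Jphi n t := Real.sqrt_pos.2 (J_pos n t)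

lemma hasDerivAt_Jphi (n : ℕ) (t : ℝ) : HasDerivAt (Jphi n) (Jphi1 n t) t := by
  have h := (Real.hasDerivAt_sqrt (J_pos n t).ne').comp t (hasDerivAt_J n t)
  have heq : Jphi1 n t = 1 / (2 * Real.sqrt (J n t)) * (-(1/2) * J (n+1) t) := by
    rw [Jphi1, Jphi]; ring
  rw [heq]
  exact h

lemma hasDerivAt_Jphi1 (n : ℕ) (t : ℝ) : HasDerivAt (Jphi1 n) (Jphi2 n t) t := by
  have hA : HasDerivAt (fun t => 2 * Jphi n t) (2 * Jphi1 n t) t :=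
    (hasDerivAt_Jphi n t).const_mul 2
  have hne : 2 * Jphi n t ≠ 0 := (mul_pos two_pos (Jphi_pos n t)).ne'
  have hInv := hA.inv hne
  have hB : HasDerivAt (fun t => -(1/2) * J (n+1) t) (-(1/2) * (-(1/2) * J (n+2) t)) t :=
    (hasDerivAt_J (n+1) t).const_mul (-(1/2))
  exact hInv.mul hB

lemma key_ineq (p n : ℕ) (hn : n = p - 3) (hp : 5 ≤ p) (t : ℝ) :
    4 * t * Jphi2 n t + 2 * (p:ℝ) * Jphi1 n t ≤ 0 := by
  have hnr : (n:ℝ) = (p:ℝ) - 3 := by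
    subst hn
    rw [Nat.cast_sub (by omega)]
    norm_num
  set s := Jphi n t with hs_def
  set b := J (n+1) t with hb_def
  set c := J (n+2) t with hc_def
  set E := Real.exp (-t/2) with hE_def
  have hs : 0 < s := Jphi_pos n t
  have hs2 : s^2 = J n t := Real.sq_sqrt (J_pos n t).le
  have hb : 0 < b := J_pos (n+1) t
  have hE : 0 < E := Real.exp_pos _
  have hble : b ≤ s^2 := by rw [hs2]; exact J_le n t
  have hA2 : t * b = 2*((n:ℝ)+1)*s^2 - 2*E := by
    have := J_ibp n t; rw [← hs2] at this; linarith
  have hB2 : t * c = 2*((n:ℝ)+2)*b - 2*E := by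
    have := J_ibp (n+1) t; push_cast at this; linarith
  have h5 : t*b*(2*s^2 - b) ≤ 2*((n:ℝ)+1)*s^2*(2*s^2 - b) := by
    apply mul_le_mul_of_nonneg_right _ (by nlinarith)
    nlinarith
  have h6 : t*c*s^2 = (2*((n:ℝ)+2)*b - 2*E)*s^2 := by rw [hB2]
  have h7 : (2*E)*s^2 = (2*((n:ℝ)+1)*s^2 - t*b)*s^2 := by
    rw [show 2*E = 2*((n:ℝ)+1)*s^2 - t*b by linarith]
  rw [hnr] at h5 h6 h7
  have key : (t/2)*s^2*c - ((p:ℝ)/2)*s^2*b ≤ (t/4)*b^2 := by nlinarith [h5, h6, h7]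
  have hexp : 4 * t * Jphi2 n t + 2 * (p:ℝ) * Jphi1 n t
      = ((t/2)*s^2*c - ((p:ℝ)/2)*s^2*b - (t/4)*b^2) / s^3 := by
    rw [Jphi2, Jphi1, ← hs_def, ← hb_def, ← hc_def]
    field_simp
    ring
  rw [hexp]
  apply div_nonpos_of_nonpos_of_nonneg (by linarith) (by positivity)

lemma J_contDiff_two (n : ℕ) : ContDiff ℝ 2 (J n) := by
  have hd0 : deriv (J n) = fun t => -(1/2) * J (n+1) t :=
    funext fun t => (hasDerivAt_J n t).deriv
  rw [show (2 : WithTop ℕ∞) = 1 + 1 from rfl, contDiff_succ_iff_deriv]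
  refine ⟨fun t => (hasDerivAt_J n t).differentiableAt, by simp, ?_⟩
  rw [hd0, contDiff_one_iff_deriv]
  constructor
  · exact Differentiable.const_mul (fun t => (hasDerivAt_J (n+1) t).differentiableAt) _
  · have hd1 : deriv (fun t => -(1/2) * J (n+1) t) = fun t => -(1/2) * (-(1/2) * J (n+2) t) := by
      funext t
      exact ((hasDerivAt_J (n+1) t).const_mul (-(1/2))).deriv
    rw [hd1]
    exact continuous_const.mul (continuous_const.mul
      (Differentiable.continuous fun t => (hasDerivAt_J (n+2) t).differentiableAt))

end Aux

/-- The Laplacian of a function on Euclidean space, as the sum of its second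
partial derivatives along the coordinate directions. -/
noncomputable def laplacian {p : ℕ} (f : EuclideanSpace ℝ (Fin p) → ℝ)
    (x : EuclideanSpace ℝ (Fin p)) : ℝ :=
  ∑ i, fderiv ℝ (fun y => fderiv ℝ f y (EuclideanSpace.single i 1)) x
    (EuclideanSpace.single i 1)

lemma hasFDerivAt_radial {p : ℕ} (φ φ1 : ℝ → ℝ)
    (h1 : ∀ t, HasDerivAt φ (φ1 t) t) (y : EuclideanSpace ℝ (Fin p)) :
    HasFDerivAt (fun z : EuclideanSpace ℝ (Fin p) => φ (‖z‖^2))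
      (φ1 (‖y‖^2) • (2 • innerSL ℝ y)) y :=
  (h1 (‖y‖^2)).comp_hasFDerivAt y (hasStrictFDerivAt_norm_sq y).hasFDerivAt

lemma laplacian_radial {p : ℕ} (φ φ1 φ2 : ℝ → ℝ)
    (h1 : ∀ t, HasDerivAt φ (φ1 t) t) (h2 : ∀ t, HasDerivAt φ1 (φ2 t) t)
    (x : EuclideanSpace ℝ (Fin p)) :
    laplacian (fun y => φ (‖y‖^2)) x
      = 4 * ‖x‖^2 * φ2 (‖x‖^2) + 2 * p * φ1 (‖x‖^2) := by
  have hfder : ∀ i : Fin p, (fun y : EuclideanSpace ℝ (Fin p) =>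
      fderiv ℝ (fun z : EuclideanSpace ℝ (Fin p) => φ (‖z‖^2)) y (EuclideanSpace.single i 1))
      = fun y => φ1 (‖y‖^2) * (2 * y i) := by
    intro i
    funext y
    rw [(hasFDerivAt_radial φ φ1 h1 y).fderiv]
    simp [EuclideanSpace.inner_single_right, real_inner_comm]
  have hsec : ∀ i : Fin p,
      fderiv ℝ (fun y : EuclideanSpace ℝ (Fin p) => φ1 (‖y‖^2) * (2 * y i)) x
        (EuclideanSpace.single i 1)
      = 4 * φ2 (‖x‖^2) * (x i)^2 + 2 * φ1 (‖x‖^2) := by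
    intro i
    have hc : HasFDerivAt (fun y : EuclideanSpace ℝ (Fin p) => φ1 (‖y‖^2))
        (φ2 (‖x‖^2) • (2 • innerSL ℝ x)) x := hasFDerivAt_radial φ1 φ2 h2 x
    have hd : HasFDerivAt (fun y : EuclideanSpace ℝ (Fin p) => 2 * y i)
        ((2:ℝ) • (EuclideanSpace.proj i : EuclideanSpace ℝ (Fin p) →L[ℝ] ℝ)) x := by
      exact ((EuclideanSpace.proj i : EuclideanSpace ℝ (Fin p) →L[ℝ] ℝ).hasFDerivAt).const_mul 2
    rw [show (fun y : EuclideanSpace ℝ (Fin p) => φ1 (‖y‖^2) * (2 * y i)) = (fun y : EuclideanSpace ℝ (Fin p) => φ1 (‖y‖^2)) * (fun y : EuclideanSpace ℝ (Fin p) => 2 * y i) from rfl, (hc.mul hd).fderiv]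
    simp [EuclideanSpace.inner_single_right, EuclideanSpace.single_apply]
    ring
  unfold laplacian
  calc ∑ i, fderiv ℝ (fun y : EuclideanSpace ℝ (Fin p) =>
        fderiv ℝ (fun z : EuclideanSpace ℝ (Fin p) => φ (‖z‖^2)) y (EuclideanSpace.single i 1)) x
        (EuclideanSpace.single i 1)
      = ∑ i : Fin p, (4 * φ2 (‖x‖^2) * (x i)^2 + 2 * φ1 (‖x‖^2)) := by
        refine Finset.sum_congr rfl fun i _ => ?_
        rw [hfder i, hsec i]
    _ = 4 * ‖x‖^2 * φ2 (‖x‖^2) + 2 * p * φ1 (‖x‖^2) := by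
        rw [Finset.sum_add_distrib, Finset.sum_const, ← Finset.mul_sum]
        have hn : ∑ i : Fin p, (x i)^2 = ‖x‖^2 := by
          rw [EuclideanSpace.norm_eq]
          rw [Real.sq_sqrt (by positivity)]
          refine Finset.sum_congr rfl fun i _ => ?_
          rw [Real.norm_eq_abs, sq_abs]
        rw [hn]
        simp [Finset.card_univ]
        ring

/-- Analytic core of Theorem 3.1: for `p ≥ 5`, the (unnormalized) marginal density
`m(y) = ∫_0^1 u^(p-3) exp(-‖y‖² u/2) du` induced by the BetaPrime hyperprior is
positive, twice continuously differentiable, and `√m` is superharmonic on `ℝ^p`. -/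
theorem stmt18 (p : ℕ) (hp : 5 ≤ p) (m : EuclideanSpace ℝ (Fin p) → ℝ)
    (hm : ∀ y, m y = ∫ u in (0 : ℝ)..1, u ^ ((p : ℝ) - 3) * Real.exp (-‖y‖ ^ 2 * u / 2)) :
    (∀ y, 0 < m y) ∧ ContDiff ℝ 2 m ∧
      ∀ y, laplacian (fun z => Real.sqrt (m z)) y ≤ 0 := by
  set n := p - 3 with hn
  have hcast : ((p : ℝ) - 3) = ((n : ℕ) : ℝ) := by
    rw [hn, Nat.cast_sub (by omega)]
    norm_num
  have hmeq : ∀ y : EuclideanSpace ℝ (Fin p), m y = J n (‖y‖^2) := by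
    intro y
    rw [hm]
    unfold J
    congr 1
    funext u
    rw [hcast, Real.rpow_natCast]
  have hmfun : m = fun y : EuclideanSpace ℝ (Fin p) => J n (‖y‖^2) := funext hmeq
  refine ⟨fun y => by rw [hmeq y]; exact J_pos n _, ?_, ?_⟩
  · rw [hmfun]
    exact (J_contDiff_two n).comp (contDiff_norm_sq ℝ)
  · intro y
    have hfun : (fun z : EuclideanSpace ℝ (Fin p) => Real.sqrt (m z))
        = fun z => Jphi n (‖z‖^2) := funext fun z => by rw [hmeq z]; rfl
    rw [hfun, laplacian_radial (Jphi n) (Jphi1 n) (Jphi2 n)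
      (hasDerivAt_Jphi n) (hasDerivAt_Jphi1 n) y]
    have := key_ineq p n hn hp (‖y‖^2)
    linarith
end
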